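/- arXiv:2409.19549 — 9 statements merged into one kernel-verified Lean document; each statement's English description precedes it below -/
import Mathlib

section
/- Let n ≥ 0 be an integer, let 𝔞₁,…,𝔞_{n+1} ∈ (0,1] be real numbers, and let r ≥ 2 be an integer. Define W_r(z) := ∑_{k≥0} (∏_{j=1}^{n+1} [𝔞_j + 1/r]_k / [1/r]_{k+1}) · z^{k+1/r} for z ∈ (0,1). Then this series converges for every z ∈ (0,1), W_r(z) → 0 as z → 0⁺, and W_r solves the inhomogeneous hypergeometric equation (L W_r)(z) = z^{1/r} for all z ∈ (0,1). -/
open scoped BigOperators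

/-- The Euler operator `D = z · d/dz` acting on functions of a real variable. -/
noncomputable def Dop (f : ℝ → ℝ) : ℝ → ℝ := fun z => z * deriv f z

/-- The hypergeometric differential operator
`L = D^{n+1} − z·∏_{j=1}^{n+1}(D + 𝔞_j)` attached to indices `(𝔞₁,…,𝔞_{n+1}; 1,…,1)`. -/
noncomputable def hgL (n : ℕ) (a : Fin (n + 1) → ℝ) (f : ℝ → ℝ) : ℝ → ℝ := fun z =>
  (Dop^[n + 1] f) z -
    z * ((List.ofFn fun j : Fin (n + 1) =>
      (fun g : ℝ → ℝ => fun w => Dop g w + a j * g w)).foldr (· ∘ ·) id f z)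

/-- `W_r(z) = ∑_{k≥0} (∏_{j=1}^{n+1} [𝔞_j + 1/r]_k / [1/r]_{k+1}) · z^{k+1/r}`. -/
noncomputable def Wr (n : ℕ) (a : Fin (n + 1) → ℝ) (r : ℕ) (z : ℝ) : ℝ :=
  ∑' k : ℕ,
    (∏ j : Fin (n + 1),
      (ascPochhammer ℝ k).eval (a j + 1 / (r : ℝ)) /
        (ascPochhammer ℝ (k + 1)).eval (1 / (r : ℝ))) *
      z ^ ((k : ℝ) + 1 / (r : ℝ))

/-!
With `s = 1/r`, `W_r(z) = ∑ c_k z^(k+s)` where each factor of `c_k` is at most `1/s`, because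
`[𝔞+s]_k ≤ [1+s]_k` and `[s]_(k+1) = s·[1+s]_k`. Hence the series converges on `(0,1)` and
`|W_r(z)| = O(z^s)` at `0`. Polynomially bounded coefficients allow termwise differentiation,
so `D` acts diagonally: `D z^(k+s) = (k+s) z^(k+s)`. Therefore `L W_r` has coefficient
`c_k (k+s)^(n+1) - c_(k-1) ∏ⱼ (k-1+s+𝔞ⱼ)` at `z^(k+s)`, which vanishes for `k ≥ 1` by the
Pochhammer recurrence, leaving `c_0 s^(n+1) z^s = z^s`.
-/

open Set Filter Topology Real

def PolyBounded (b : ℕ → ℝ) : Prop :=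
  ∃ C : ℝ, ∃ M : ℕ, ∀ k, |b k| ≤ C * ((k : ℝ) + 1) ^ M

namespace PolyBounded

lemma of_abs_le {b : ℕ → ℝ} {C : ℝ} (h : ∀ k, |b k| ≤ C) : PolyBounded b :=
  ⟨C, 0, fun k => by simpa using h k⟩

lemma one : PolyBounded fun _ => 1 :=
  of_abs_le (C := 1) fun _ => by simp

lemma natCast_add (c : ℝ) : PolyBounded fun k => (k : ℝ) + c := by
  refine ⟨1 + |c|, 1, fun k => ?_⟩
  have hk : (0 : ℝ) ≤ k := k.cast_nonneg
  calc |(k : ℝ) + c| ≤ |(k : ℝ)| + |c| := abs_add_le _ _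
    _ ≤ (1 + |c|) * ((k : ℝ) + 1) ^ 1 := by
      rw [abs_of_nonneg hk]; nlinarith [abs_nonneg c]

lemma mul {b c : ℕ → ℝ} (hb : PolyBounded b) (hc : PolyBounded c) :
    PolyBounded fun k => b k * c k := by
  obtain ⟨C, M, hC⟩ := hb
  obtain ⟨D, N, hD⟩ := hc
  refine ⟨C * D, M + N, fun k => ?_⟩
  calc |b k * c k| = |b k| * |c k| := abs_mul _ _
    _ ≤ (C * ((k : ℝ) + 1) ^ M) * (D * ((k : ℝ) + 1) ^ N) :=
      mul_le_mul (hC k) (hD k) (abs_nonneg _) ((abs_nonneg _).trans (hC k))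
    _ = C * D * ((k : ℝ) + 1) ^ (M + N) := by ring

lemma pow {b : ℕ → ℝ} (hb : PolyBounded b) (m : ℕ) : PolyBounded fun k => b k ^ m := by
  induction m with
  | zero => simpa using one
  | succ m ih => simpa only [pow_succ] using ih.mul hb

lemma prod {ι : Type*} (s : Finset ι) {b : ι → ℕ → ℝ} (h : ∀ i ∈ s, PolyBounded (b i)) :
    PolyBounded fun k => ∏ i ∈ s, b i k := by
  classical
  induction s using Finset.induction_on with
  | empty => simpa using one
  | insert i s hi ih =>
    simp only [Finset.prod_insert hi]
    exact (h i (Finset.mem_insert_self i s)).mul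
      (ih fun j hj => h j (Finset.mem_insert_of_mem hj))

lemma summable_abs_mul_pow {b : ℕ → ℝ} (hb : PolyBounded b) {ρ : ℝ} (hρ : ρ ∈ Ioo 0 1) :
    Summable fun k => |b k| * ρ ^ k := by
  obtain ⟨C, M, hC⟩ := hb
  have hnorm : ‖ρ‖ < 1 := by rw [norm_of_nonneg hρ.1.le]; exact hρ.2
  have hshift : Summable fun k : ℕ => ρ * (((k : ℝ) + 1) ^ M * ρ ^ k) := by
    refine ((summable_nat_add_iff (f := fun k : ℕ => (k : ℝ) ^ M * ρ ^ k) 1).mpr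
      (summable_pow_mul_geometric_of_norm_lt_one M hnorm)).congr fun k => ?_
    push_cast; ring
  have hmajor : Summable fun k : ℕ => C * (((k : ℝ) + 1) ^ M * ρ ^ k) := by
    refine (hshift.mul_left (C * ρ⁻¹)).congr fun k => ?_
    field_simp [hρ.1.ne']
  refine hmajor.of_nonneg_of_le (fun k => mul_nonneg (abs_nonneg _) (pow_nonneg hρ.1.le k))
    fun k => ?_
  rw [← mul_assoc]
  exact mul_le_mul_of_nonneg_right (hC k) (pow_nonneg hρ.1.le k)

end PolyBounded

noncomputable def frobeniusSeries (s : ℝ) (b : ℕ → ℝ) (z : ℝ) : ℝ :=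
  ∑' k : ℕ, b k * z ^ ((k : ℝ) + s)

section FrobeniusSeries

variable {s : ℝ} {b : ℕ → ℝ}

lemma abs_mul_rpow_natCast_add (x : ℝ) {z : ℝ} (hz : 0 < z) (k : ℕ) (c : ℝ) :
    |x * z ^ ((k : ℝ) + c)| = |x| * z ^ k * z ^ c := by
  rw [abs_mul, abs_of_pos (rpow_pos_of_pos hz _), rpow_add hz, rpow_natCast, mul_assoc]

lemma summable_frobeniusSeries (hb : PolyBounded b) (s : ℝ) {z : ℝ} (hz : z ∈ Ioo 0 1) :
    Summable fun k => b k * z ^ ((k : ℝ) + s) := by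
  refine Summable.of_norm ?_
  simp only [Real.norm_eq_abs, abs_mul_rpow_natCast_add _ hz.1]
  exact (hb.summable_abs_mul_pow hz).mul_right _

lemma abs_frobeniusSeries_le (hb : PolyBounded b) {z : ℝ} (hz : z ∈ Ioo 0 (1 / 2)) :
    |frobeniusSeries s b z| ≤ (∑' k, |b k| * (1 / 2) ^ k) * z ^ s := by
  have hz1 : z ∈ Ioo 0 1 := ⟨hz.1, by linarith [hz.2]⟩
  have hsum := (hb.summable_abs_mul_pow hz1).mul_right (z ^ s)
  calc |frobeniusSeries s b z| ≤ ∑' k, |b k| * z ^ k * z ^ s := by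
        simpa only [frobeniusSeries, Real.norm_eq_abs, abs_mul_rpow_natCast_add _ hz.1] using
          norm_tsum_le_tsum_norm (summable_frobeniusSeries hb s hz1).norm
    _ ≤ ∑' k, |b k| * (1 / 2) ^ k * z ^ s := by
        refine hsum.tsum_le_tsum (fun k => ?_)
          ((hb.summable_abs_mul_pow (by norm_num)).mul_right _)
        exact mul_le_mul_of_nonneg_right
          (mul_le_mul_of_nonneg_left (pow_le_pow_left₀ hz.1.le hz.2.le k) (abs_nonneg _))
          (rpow_nonneg hz.1.le s)
    _ = (∑' k, |b k| * (1 / 2) ^ k) * z ^ s := tsum_mul_right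

lemma tendsto_frobeniusSeries_nhdsGT_zero (hb : PolyBounded b) (hs : 0 < s) :
    Tendsto (frobeniusSeries s b) (𝓝[>] 0) (𝓝 0) := by
  have hpow : Tendsto (fun z : ℝ => (∑' k, |b k| * (1 / 2) ^ k) * z ^ s) (𝓝[>] 0) (𝓝 0) := by
    have := ((continuous_rpow_const hs.le).tendsto 0).const_mul (∑' k, |b k| * (1 / 2) ^ k)
    simpa [zero_rpow hs.ne'] using this.mono_left nhdsWithin_le_nhds
  have hsmall : ∀ᶠ z in 𝓝[>] (0 : ℝ), z ∈ Ioo 0 (1 / 2) :=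
    Ioo_mem_nhdsGT (by norm_num)
  exact squeeze_zero_norm' (hsmall.mono fun z hz => abs_frobeniusSeries_le hb hz) hpow

lemma hasDerivAt_frobeniusSeries (hb : PolyBounded b) (s : ℝ) {z : ℝ} (hz : z ∈ Ioo 0 1) :
    HasDerivAt (frobeniusSeries s b)
      (∑' k, b k * ((k : ℝ) + s) * z ^ ((k : ℝ) + s - 1)) z := by
  obtain ⟨δ, hδ, hδz⟩ := exists_between hz.1
  obtain ⟨ρ, hzρ, hρ1⟩ := exists_between hz.2
  have hρ : ρ ∈ Ioo 0 1 := ⟨hz.1.trans hzρ, hρ1⟩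
  have hb' := hb.mul (PolyBounded.natCast_add s)
  refine hasDerivAt_tsum_of_isPreconnected (g := fun k y => b k * y ^ ((k : ℝ) + s))
    (g' := fun k y => b k * ((k : ℝ) + s) * y ^ ((k : ℝ) + s - 1))
    (u := fun k => |b k * ((k : ℝ) + s)| * ρ ^ k * (δ ^ (s - 1) + ρ ^ (s - 1)))
    ((hb'.summable_abs_mul_pow hρ).mul_right _) isOpen_Ioo isPreconnected_Ioo
    (fun k y hy => ?_) (fun k y hy => ?_) (⟨hδz, hzρ⟩ : z ∈ Ioo δ ρ)
    (summable_frobeniusSeries hb s hz) ⟨hδz, hzρ⟩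
  · exact ((hasDerivAt_rpow_const (Or.inl (hδ.trans hy.1).ne')).const_mul (b k)).congr_deriv
      (by ring)
  · have hy0 : 0 < y := hδ.trans hy.1
    have hys : y ^ (s - 1) ≤ δ ^ (s - 1) + ρ ^ (s - 1) := by
      rcases le_total (s - 1) 0 with h | h
      · linarith [rpow_le_rpow_of_nonpos hδ hy.1.le h, rpow_nonneg hρ.1.le (s - 1)]
      · linarith [rpow_le_rpow hy0.le hy.2.le h, rpow_nonneg hδ.le (s - 1)]
    rw [Real.norm_eq_abs, show (k : ℝ) + s - 1 = k + (s - 1) by ring,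
      abs_mul_rpow_natCast_add _ hy0]
    exact mul_le_mul (mul_le_mul_of_nonneg_left (pow_le_pow_left₀ hy0.le hy.2.le k)
      (abs_nonneg _)) hys (rpow_nonneg hy0.le _)
      (mul_nonneg (abs_nonneg _) (pow_nonneg hρ.1.le k))

lemma Dop_frobeniusSeries (hb : PolyBounded b) (s : ℝ) {z : ℝ} (hz : z ∈ Ioo 0 1) :
    Dop (frobeniusSeries s b) z = frobeniusSeries s (fun k => b k * ((k : ℝ) + s)) z := by
  rw [Dop, (hasDerivAt_frobeniusSeries hb s hz).deriv, frobeniusSeries, ← tsum_mul_left]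
  refine tsum_congr fun k => ?_
  rw [rpow_sub_one hz.1.ne']
  field_simp [hz.1.ne']

end FrobeniusSeries

section EulerOperator

variable {s : ℝ} {b : ℕ → ℝ} {g : ℝ → ℝ}

lemma Set.EqOn.Dop_frobeniusSeries (hb : PolyBounded b)
    (hg : EqOn g (frobeniusSeries s b) (Ioo 0 1)) :
    EqOn (Dop g) (frobeniusSeries s fun k => b k * ((k : ℝ) + s)) (Ioo 0 1) := by
  intro z hz
  have hev : g =ᶠ[𝓝 z] frobeniusSeries s b := hg.eventuallyEq_of_mem (isOpen_Ioo.mem_nhds hz)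
  rw [← _root_.Dop_frobeniusSeries hb s hz, Dop, Dop, hev.deriv_eq]

lemma Set.EqOn.iterate_Dop_frobeniusSeries (hb : PolyBounded b)
    (hg : EqOn g (frobeniusSeries s b) (Ioo 0 1)) (m : ℕ) :
    EqOn (Dop^[m] g) (frobeniusSeries s fun k => b k * ((k : ℝ) + s) ^ m) (Ioo 0 1) := by
  induction m with
  | zero => simpa using hg
  | succ m ih =>
    rw [Function.iterate_succ_apply']
    simpa only [pow_succ, mul_assoc] using
      ih.Dop_frobeniusSeries (hb.mul ((PolyBounded.natCast_add s).pow m))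

lemma Set.EqOn.Dop_add_mul_frobeniusSeries (hb : PolyBounded b)
    (hg : EqOn g (frobeniusSeries s b) (Ioo 0 1)) (c : ℝ) :
    EqOn (fun w => Dop g w + c * g w)
      (frobeniusSeries s fun k => b k * ((k : ℝ) + s + c)) (Ioo 0 1) := by
  intro z hz
  show Dop g z + c * g z = _
  rw [hg.Dop_frobeniusSeries hb hz, hg hz, frobeniusSeries, frobeniusSeries, ← tsum_mul_left,
    ← (summable_frobeniusSeries (hb.mul (PolyBounded.natCast_add s)) s hz).tsum_add
      ((summable_frobeniusSeries hb s hz).mul_left c)]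
  exact tsum_congr fun k => by ring

lemma Set.EqOn.foldr_Dop_add_mul_frobeniusSeries (hb : PolyBounded b)
    (hg : EqOn g (frobeniusSeries s b) (Ioo 0 1)) {m : ℕ} (a : Fin m → ℝ) :
    EqOn ((List.ofFn fun j => fun (f : ℝ → ℝ) w => Dop f w + a j * f w).foldr (· ∘ ·) id g)
      (frobeniusSeries s fun k => b k * ∏ j, ((k : ℝ) + s + a j)) (Ioo 0 1) := by
  induction m with
  | zero => simpa using hg
  | succ m ih =>
    have htail := ih (fun j => a j.succ)
    have hbtail : PolyBounded fun k => b k * ∏ j : Fin m, ((k : ℝ) + s + a j.succ) :=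
      hb.mul <| PolyBounded.prod _ fun j _ => by
        simpa only [add_assoc] using PolyBounded.natCast_add (s + a j.succ)
    simpa only [List.ofFn_succ, List.foldr_cons, Function.comp_apply, Fin.prod_univ_succ,
      mul_comm, mul_left_comm, mul_assoc] using htail.Dop_add_mul_frobeniusSeries hbtail (a 0)

end EulerOperator

lemma frobeniusSeries_eq_add_mul {s : ℝ} {b : ℕ → ℝ} (hb : PolyBounded b) {z : ℝ}
    (hz : z ∈ Ioo 0 1) :
    frobeniusSeries s b z = b 0 * z ^ s + z * frobeniusSeries s (fun k => b (k + 1)) z := by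
  rw [frobeniusSeries, (summable_frobeniusSeries hb s hz).tsum_eq_zero_add, frobeniusSeries,
    ← tsum_mul_left]
  congr 1
  · simp
  · refine tsum_congr fun k => ?_
    rw [Nat.cast_succ, add_right_comm, rpow_add hz.1, rpow_one]
    ring

theorem hgL_frobeniusSeries {n : ℕ} {a : Fin (n + 1) → ℝ} {s : ℝ} {b : ℕ → ℝ}
    (hb : PolyBounded b)
    (hrec : ∀ k : ℕ, b (k + 1) * ((k : ℝ) + 1 + s) ^ (n + 1) = b k * ∏ j, ((k : ℝ) + s + a j))
    {z : ℝ} (hz : z ∈ Ioo 0 1) :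
    hgL n a (frobeniusSeries s b) z = b 0 * s ^ (n + 1) * z ^ s := by
  have hD := (eqOn_refl (frobeniusSeries s b) _).iterate_Dop_frobeniusSeries hb (n + 1) hz
  have hT := (eqOn_refl (frobeniusSeries s b) _).foldr_Dop_add_mul_frobeniusSeries hb a hz
  rw [hgL, hD, hT, frobeniusSeries_eq_add_mul (hb.mul ((PolyBounded.natCast_add s).pow _)) hz]
  simp only [Nat.cast_succ, Nat.cast_zero, zero_add, hrec]
  ring

lemma ascPochhammer_eval_le_of_le {S : Type*} [Semiring S] [PartialOrder S]
    [IsStrictOrderedRing S] (n : ℕ) {x y : S} (hx : 0 < x) (hxy : x ≤ y) :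
    (ascPochhammer S n).eval x ≤ (ascPochhammer S n).eval y := by
  induction n with
  | zero => simp
  | succ n ih =>
    rw [ascPochhammer_succ_eval, ascPochhammer_succ_eval]
    exact mul_le_mul ih (add_le_add_left hxy _) (add_nonneg hx.le n.cast_nonneg)
      (ascPochhammer_pos n y (hx.trans_le hxy)).le

section PochhammerRatio

variable {a s : ℝ}

lemma abs_ascPochhammer_div_le (ha0 : 0 ≤ a) (ha1 : a ≤ 1) (hs : 0 < s) (k : ℕ) :
    |(ascPochhammer ℝ k).eval (a + s) / (ascPochhammer ℝ (k + 1)).eval s| ≤ 1 / s := by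
  have hnum := ascPochhammer_pos k (a + s) (by linarith)
  have hden := ascPochhammer_pos (k + 1) s hs
  have hsucc : (ascPochhammer ℝ (k + 1)).eval s = s * (ascPochhammer ℝ k).eval (s + 1) := by
    simp [ascPochhammer_succ_left, Polynomial.eval_comp]
  rw [abs_of_pos (div_pos hnum hden), div_le_div_iff₀ hden hs, one_mul, hsucc, mul_comm]
  exact mul_le_mul_of_nonneg_left
    (ascPochhammer_eval_le_of_le k (by linarith) (by linarith)) hs.le

lemma ascPochhammer_div_succ_mul (hs : 0 < s) (k : ℕ) :
    (ascPochhammer ℝ (k + 1)).eval (a + s) / (ascPochhammer ℝ (k + 2)).eval s *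
        ((k : ℝ) + 1 + s) =
      (ascPochhammer ℝ k).eval (a + s) / (ascPochhammer ℝ (k + 1)).eval s *
        ((k : ℝ) + s + a) := by
  have hden := (ascPochhammer_pos (k + 1) s hs).ne'
  have hlin : s + ((k : ℝ) + 1) ≠ 0 := by positivity
  rw [ascPochhammer_succ_eval (k + 1) s, ascPochhammer_succ_eval k (a + s)]
  push_cast
  field_simp
  ring

end PochhammerRatio

theorem stmt0 (n : ℕ) (a : Fin (n + 1) → ℝ) (ha : ∀ j, a j ∈ Set.Ioc (0 : ℝ) 1)
    (r : ℕ) (hr : 2 ≤ r) :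
    (∀ z ∈ Set.Ioo (0 : ℝ) 1,
      Summable fun k : ℕ =>
        (∏ j : Fin (n + 1),
          (ascPochhammer ℝ k).eval (a j + 1 / (r : ℝ)) /
            (ascPochhammer ℝ (k + 1)).eval (1 / (r : ℝ))) *
          z ^ ((k : ℝ) + 1 / (r : ℝ))) ∧
    Filter.Tendsto (Wr n a r) (nhdsWithin 0 (Set.Ioi 0)) (nhds 0) ∧
    ∀ z ∈ Set.Ioo (0 : ℝ) 1, hgL n a (Wr n a r) z = z ^ (1 / (r : ℝ)) := by
  set s : ℝ := 1 / (r : ℝ)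
  have hs : 0 < s := one_div_pos.mpr (by exact_mod_cast (by omega : 0 < r))
  set c : ℕ → ℝ := fun k => ∏ j : Fin (n + 1),
    (ascPochhammer ℝ k).eval (a j + s) / (ascPochhammer ℝ (k + 1)).eval s
  have hc : PolyBounded c := PolyBounded.prod _ fun j _ =>
    PolyBounded.of_abs_le (abs_ascPochhammer_div_le (ha j).1.le (ha j).2 hs)
  have hrec (k : ℕ) : c (k + 1) * ((k : ℝ) + 1 + s) ^ (n + 1) = c k * ∏ j, ((k : ℝ) + s + a j) := by
    rw [← Fin.prod_const, ← Finset.prod_mul_distrib, ← Finset.prod_mul_distrib]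
    exact Finset.prod_congr rfl fun j _ => ascPochhammer_div_succ_mul hs k
  have hc0 : c 0 * s ^ (n + 1) = 1 := by
    simp [c, hs.ne']
  have hW : Wr n a r = frobeniusSeries s c := rfl
  refine ⟨fun z hz => summable_frobeniusSeries hc s hz,
    hW ▸ tendsto_frobeniusSeries_nhdsGT_zero hc hs, fun z hz => ?_⟩
  rw [hW, hgL_frobeniusSeries hc hrec hz, hc0, one_mul]
end

section
/- Let n ≥ 0 be an integer, 𝔞₁,…,𝔞_{n+1} ∈ (0,1] real numbers, and s ∈ (0,1) a fixed real number. Define Φ(s,z) := z^s · ∑_{k≥0} (∏_{j=1}^{n+1} [𝔞_j + s]_k / [1 + s]_k) · z^k for z ∈ (0,1). Then the series converges for every z ∈ (0,1), and (L Φ(s,·))(z) = s^{n+1} · z^s for all z ∈ (0,1). -/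
open scoped BigOperators

/-- coefficients dominated geometrically at every radius `r < 1`. -/
def MyGood (c : ℕ → ℝ) : Prop := ∀ r ∈ Set.Ioo (0:ℝ) 1, Summable fun k => |c k| * r ^ k

lemma myGood_of_le_one {c : ℕ → ℝ} (h : ∀ k, |c k| ≤ 1) : MyGood c := by
  rintro r ⟨hr0, hr1⟩
  refine Summable.of_nonneg_of_le (fun k => by positivity) (fun k => ?_)
    (summable_geometric_of_lt_one hr0.le hr1)
  have := h k
  nlinarith [pow_nonneg hr0.le k, abs_nonneg (c k)]

lemma MyGood.mul_linear {c : ℕ → ℝ} (hc : MyGood c) (t : ℝ) :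
    MyGood (fun k => ((k : ℝ) + t) * c k) := by
  rintro r ⟨hr0, hr1⟩
  set r' : ℝ := (1 + r) / 2 with hr'def
  have hr'0 : 0 < r' := by positivity
  have hr'1 : r' < 1 := by rw [hr'def]; linarith
  have hrr' : r < r' := by rw [hr'def]; linarith
  obtain ⟨C, hC⟩ := ((hc r' ⟨hr'0, hr'1⟩).tendsto_atTop_zero.bddAbove_range)
  have hCmem : ∀ k, |c k| * r' ^ k ≤ C := fun k => hC (Set.mem_range_self k)
  set q : ℝ := r / r' with hqdef
  have hq0 : 0 ≤ q := by positivity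
  have hq1 : q < 1 := by rw [hqdef, div_lt_one hr'0]; exact hrr'
  have hqn : ‖q‖ < 1 := by rwa [Real.norm_eq_abs, abs_of_nonneg hq0]
  have hsum : Summable fun k : ℕ => C * ((k : ℝ) * q ^ k) + C * (|t| * q ^ k) := by
    refine Summable.add (Summable.mul_left C ?_)
      (Summable.mul_left C ((summable_geometric_of_lt_one hq0 hq1).mul_left |t|))
    have := summable_pow_mul_geometric_of_norm_lt_one (R := ℝ) 1 hqn
    simpa using this
  refine Summable.of_nonneg_of_le (fun k => by positivity) (fun k => ?_) hsum
  show |((k : ℝ) + t) * c k| * r ^ k ≤ _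
  have hrk : r ^ k = r' ^ k * q ^ k := by
    rw [hqdef, ← mul_pow, mul_div_cancel₀ _ (ne_of_gt hr'0)]
  have h1 : |((k : ℝ) + t) * c k| ≤ ((k : ℝ) + |t|) * |c k| := by
    rw [abs_mul]
    have h2 : |(k : ℝ) + t| ≤ (k : ℝ) + |t| :=
      (abs_add_le _ _).trans (by rw [abs_of_nonneg (Nat.cast_nonneg k)])
    exact mul_le_mul_of_nonneg_right h2 (abs_nonneg _)
  calc |((k : ℝ) + t) * c k| * r ^ k ≤ ((k : ℝ) + |t|) * |c k| * r ^ k :=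
        mul_le_mul_of_nonneg_right h1 (by positivity)
    _ = ((k : ℝ) + |t|) * (|c k| * r' ^ k) * q ^ k := by rw [hrk]; ring
    _ ≤ ((k : ℝ) + |t|) * C * q ^ k := by
        have hC0 : 0 ≤ |c k| * r' ^ k := by positivity
        have h3 := hCmem k
        have h4 : (0:ℝ) ≤ (k : ℝ) + |t| := by positivity
        have h5 : (0:ℝ) ≤ q ^ k := by positivity
        exact mul_le_mul_of_nonneg_right (mul_le_mul_of_nonneg_left h3 h4) h5
    _ = C * ((k : ℝ) * q ^ k) + C * (|t| * q ^ k) := by ring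

lemma MyGood.pow_linear {c : ℕ → ℝ} (hc : MyGood c) (t : ℝ) (m : ℕ) :
    MyGood (fun k => ((k : ℝ) + t) ^ m * c k) := by
  induction m with
  | zero => simpa using hc
  | succ m ih =>
      have := ih.mul_linear t
      refine fun r hr => (this r hr).congr fun k => ?_
      simp only
      ring_nf

/-- the basic series. -/
noncomputable def myS (s : ℝ) (c : ℕ → ℝ) (z : ℝ) : ℝ := ∑' k : ℕ, c k * z ^ ((k : ℝ) + s)

lemma myS_summable {s : ℝ} {c : ℕ → ℝ} (hc : MyGood c) {z : ℝ} (hz : z ∈ Set.Ioo (0:ℝ) 1) :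
    Summable fun k : ℕ => c k * z ^ ((k : ℝ) + s) := by
  refine Summable.of_norm ?_
  have h : ∀ k : ℕ, ‖c k * z ^ ((k : ℝ) + s)‖ = (|c k| * z ^ k) * z ^ s := by
    intro k
    rw [norm_mul, Real.norm_eq_abs, Real.norm_eq_abs,
      abs_of_nonneg (Real.rpow_nonneg hz.1.le _), Real.rpow_add hz.1,
      Real.rpow_natCast, mul_assoc]
  simpa only [h] using (hc z hz).mul_right (z ^ s)

lemma myS_hasDerivAt {s : ℝ} (hs0 : 0 < s) (hs1 : s < 1) {c : ℕ → ℝ} (hc : MyGood c)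
    {z : ℝ} (hz : z ∈ Set.Ioo (0:ℝ) 1) :
    HasDerivAt (myS s c) (∑' k : ℕ, c k * (((k : ℝ) + s) * z ^ ((k : ℝ) + s - 1))) z := by
  obtain ⟨hz0, hz1⟩ := hz
  set ε : ℝ := z / 2 with hεdef
  set r : ℝ := (1 + z) / 2 with hrdef
  have hε0 : 0 < ε := by positivity
  have hr1 : r < 1 := by rw [hrdef]; linarith
  have hr0 : 0 < r := by positivity
  have hzmem : z ∈ Set.Ioo ε r :=
    ⟨by show z / 2 < z; linarith, by show z < (1 + z) / 2; linarith⟩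
  have hu : Summable fun k : ℕ => (((k : ℝ) + s) * |c k| * r ^ k) * ε ^ (s - 1) := by
    have h1 := (hc.mul_linear s) r ⟨hr0, hr1⟩
    refine (h1.mul_right (ε ^ (s - 1))).congr fun k => ?_
    have : |((k : ℝ) + s) * c k| = ((k : ℝ) + s) * |c k| := by
      rw [abs_mul, abs_of_nonneg (by positivity : (0:ℝ) ≤ (k : ℝ) + s)]
    rw [this]
  have hg : ∀ (k : ℕ) (y : ℝ), y ∈ Set.Ioo ε r →
      HasDerivAt (fun x : ℝ => c k * x ^ ((k : ℝ) + s))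
        (c k * (((k : ℝ) + s) * y ^ ((k : ℝ) + s - 1))) y := by
    intro k y hy
    exact (Real.hasDerivAt_rpow_const (Or.inl (ne_of_gt (lt_trans hε0 hy.1)))).const_mul (c k)
  have hg' : ∀ (k : ℕ) (y : ℝ), y ∈ Set.Ioo ε r →
      ‖c k * (((k : ℝ) + s) * y ^ ((k : ℝ) + s - 1))‖ ≤
        (((k : ℝ) + s) * |c k| * r ^ k) * ε ^ (s - 1) := by
    intro k y hy
    have hy0 : 0 < y := lt_trans hε0 hy.1
    have hks : (0:ℝ) ≤ (k : ℝ) + s := by positivity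
    rw [norm_mul, norm_mul, Real.norm_eq_abs, Real.norm_eq_abs, Real.norm_eq_abs,
      abs_of_nonneg hks, abs_of_nonneg (Real.rpow_nonneg hy0.le _)]
    have hsplit : y ^ ((k : ℝ) + s - 1) = y ^ k * y ^ (s - 1) := by
      rw [show (k : ℝ) + s - 1 = (k : ℝ) + (s - 1) by ring, Real.rpow_add hy0,
        Real.rpow_natCast]
    rw [hsplit]
    have h1 : y ^ k ≤ r ^ k := pow_le_pow_left₀ hy0.le hy.2.le k
    have h2 : y ^ (s - 1) ≤ ε ^ (s - 1) :=
      Real.rpow_le_rpow_of_nonpos hε0 hy.1.le (by linarith)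
    have h3 : (0:ℝ) ≤ y ^ (s - 1) := Real.rpow_nonneg hy0.le _
    have h4 : (0:ℝ) ≤ y ^ k := by positivity
    calc |c k| * (((k : ℝ) + s) * (y ^ k * y ^ (s - 1)))
        = ((k : ℝ) + s) * |c k| * (y ^ k * y ^ (s - 1)) := by ring
      _ ≤ ((k : ℝ) + s) * |c k| * (r ^ k * ε ^ (s - 1)) := by
          refine mul_le_mul_of_nonneg_left ?_ (by positivity)
          exact mul_le_mul h1 h2 h3 (by positivity)
      _ = (((k : ℝ) + s) * |c k| * r ^ k) * ε ^ (s - 1) := by ring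
  have h0 : Summable fun k : ℕ => c k * z ^ ((k : ℝ) + s) := myS_summable hc ⟨hz0, hz1⟩
  exact hasDerivAt_tsum_of_isPreconnected hu isOpen_Ioo (isPreconnected_Ioo)
    hg hg' hzmem h0 hzmem

lemma myS_Dop {s : ℝ} (hs0 : 0 < s) (hs1 : s < 1) {c : ℕ → ℝ} (hc : MyGood c) :
    Set.EqOn (Dop (myS s c)) (myS s (fun k => ((k : ℝ) + s) * c k)) (Set.Ioo (0:ℝ) 1) := by
  intro z hz
  have hd := (myS_hasDerivAt hs0 hs1 hc hz).deriv
  show z * deriv (myS s c) z = _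
  rw [hd, myS, ← tsum_mul_left]
  refine tsum_congr fun k => ?_
  have hzz : z ^ ((k : ℝ) + s) = z ^ ((k : ℝ) + s - 1) * z := by
    rw [← Real.rpow_add_one hz.1.ne' ((k : ℝ) + s - 1)]; ring_nf
  rw [hzz]; ring

lemma eqOn_Dop {f g : ℝ → ℝ} (h : Set.EqOn f g (Set.Ioo (0:ℝ) 1)) :
    Set.EqOn (Dop f) (Dop g) (Set.Ioo (0:ℝ) 1) := by
  intro z hz
  have he : f =ᶠ[nhds z] g := Filter.eventuallyEq_of_mem (isOpen_Ioo.mem_nhds hz) h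
  show z * deriv f z = z * deriv g z
  rw [he.deriv_eq]

lemma eqOn_Dop_iterate (m : ℕ) : ∀ {f g : ℝ → ℝ}, Set.EqOn f g (Set.Ioo (0:ℝ) 1) →
    Set.EqOn (Dop^[m] f) (Dop^[m] g) (Set.Ioo (0:ℝ) 1) := by
  induction m with
  | zero => intro f g h; simpa using h
  | succ m ih =>
      intro f g h
      rw [Function.iterate_succ_apply, Function.iterate_succ_apply]
      exact ih (eqOn_Dop h)

lemma myS_Dop_iterate {s : ℝ} (hs0 : 0 < s) (hs1 : s < 1) (m : ℕ) :
    ∀ (c : ℕ → ℝ), MyGood c →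
    Set.EqOn (Dop^[m] (myS s c)) (myS s (fun k => ((k : ℝ) + s) ^ m * c k))
      (Set.Ioo (0:ℝ) 1) := by
  induction m with
  | zero =>
      intro c hc z hz
      simp only [Function.iterate_zero, id, myS, pow_zero, one_mul]
  | succ m ih =>
      intro c hc z hz
      rw [Function.iterate_succ_apply]
      calc Dop^[m] (Dop (myS s c)) z
          = Dop^[m] (myS s fun k => ((k : ℝ) + s) * c k) z :=
            eqOn_Dop_iterate m (myS_Dop hs0 hs1 hc) hz
        _ = myS s (fun k => ((k : ℝ) + s) ^ m * (((k : ℝ) + s) * c k)) z :=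
            ih _ (hc.mul_linear s) hz
        _ = myS s (fun k => ((k : ℝ) + s) ^ (m + 1) * c k) z := by
            congr 1; funext k; ring

lemma MyGood.const_mul {c : ℕ → ℝ} (hc : MyGood c) (a : ℝ) :
    MyGood (fun k => a * c k) := by
  intro r hr
  refine ((hc r hr).mul_left |a|).congr fun k => ?_
  simp only [abs_mul]; ring

lemma MyGood.list_prod {s : ℝ} (t : List ℝ) {c : ℕ → ℝ} (hc : MyGood c) :
    MyGood (fun k => (t.map fun aj => ((k : ℝ) + s + aj)).prod * c k) := by
  induction t with
  | nil => refine fun r hr => (hc r hr).congr fun k => by simp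
  | cons a0 t ih =>
      have h1 := ih.mul_linear (s + a0)
      refine fun r hr => (h1 r hr).congr fun k => ?_
      simp only [List.map_cons, List.prod_cons]
      rw [show ((k:ℝ) + s + a0) * (List.map (fun aj => (k:ℝ) + s + aj) t).prod * c k
          = ((k:ℝ) + (s + a0)) * ((List.map (fun aj => (k:ℝ) + s + aj) t).prod * c k) by ring]

lemma foldr_eqOn {s : ℝ} (hs0 : 0 < s) (hs1 : s < 1) (t : List ℝ) :
    ∀ (c : ℕ → ℝ), MyGood c → ∀ f : ℝ → ℝ, Set.EqOn f (myS s c) (Set.Ioo (0:ℝ) 1) →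
    Set.EqOn ((t.map (fun aj => (fun g : ℝ → ℝ => fun w => Dop g w + aj * g w))).foldr
        (· ∘ ·) id f)
      (myS s (fun k => (t.map fun aj => ((k : ℝ) + s + aj)).prod * c k))
      (Set.Ioo (0:ℝ) 1) := by
  induction t with
  | nil =>
      intro c hc f hf z hz
      simpa [myS] using hf hz
  | cons a0 t ih =>
      intro c hc f hf z hz
      simp only [List.map_cons, List.foldr_cons, Function.comp_apply]
      set g : ℝ → ℝ := (t.map (fun aj => (fun g : ℝ → ℝ => fun w => Dop g w + aj * g w))).foldr
        (· ∘ ·) id f with hgdef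
      set c' : ℕ → ℝ := fun k => (t.map fun aj => ((k : ℝ) + s + aj)).prod * c k with hc'def
      have hc' : MyGood c' := MyGood.list_prod t hc
      have hg : Set.EqOn g (myS s c') (Set.Ioo (0:ℝ) 1) := ih c hc f hf
      have e1 : Summable fun k : ℕ => (((k : ℝ) + s) * c' k) * z ^ ((k : ℝ) + s) :=
        myS_summable (hc'.mul_linear s) hz
      have e2 : Summable fun k : ℕ => (a0 * c' k) * z ^ ((k : ℝ) + s) :=
        myS_summable (hc'.const_mul a0) hz
      show Dop g z + a0 * g z = _
      have hDop : Dop g z = myS s (fun k => ((k : ℝ) + s) * c' k) z :=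
        (eqOn_Dop hg hz).trans (myS_Dop hs0 hs1 hc' hz)
      rw [hDop, hg hz]
      have ha0 : a0 * myS s c' z = ∑' k : ℕ, (a0 * c' k) * z ^ ((k : ℝ) + s) := by
        rw [myS, ← tsum_mul_left]
        exact tsum_congr fun k => by ring
      rw [ha0, myS, ← Summable.tsum_add e1 e2]
      refine tsum_congr fun k => ?_
      simp only [hc'def, List.map_cons, List.prod_cons]
      ring

lemma poch_mono (k : ℕ) : ∀ {x y : ℝ}, 0 < x → x ≤ y →
    (ascPochhammer ℝ k).eval x ≤ (ascPochhammer ℝ k).eval y := by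
  induction k with
  | zero => intro x y _ _; simp
  | succ k ih =>
      intro x y hx hxy
      rw [ascPochhammer_succ_eval, ascPochhammer_succ_eval]
      have h1 := ih hx hxy
      have h2 : x + (k : ℝ) ≤ y + (k : ℝ) := by linarith
      have h3 : (0:ℝ) ≤ x + (k : ℝ) := by positivity
      have h4 : (0:ℝ) ≤ (ascPochhammer ℝ k).eval y :=
        (ascPochhammer_pos k y (lt_of_lt_of_le hx hxy)).le
      exact mul_le_mul h1 h2 h3 h4

/-- The Frobenius deformation
`Φ(s,z) = z^s · ∑_{k≥0} (∏_{j=1}^{n+1} [𝔞_j + s]_k / [1 + s]_k) · z^k`. -/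
noncomputable def PhiFrob (n : ℕ) (a : Fin (n + 1) → ℝ) (s : ℝ) (z : ℝ) : ℝ :=
  z ^ s * ∑' k : ℕ,
    (∏ j : Fin (n + 1),
      (ascPochhammer ℝ k).eval (a j + s) / (ascPochhammer ℝ k).eval (1 + s)) * z ^ k

theorem stmt1 (n : ℕ) (a : Fin (n + 1) → ℝ) (ha : ∀ j, a j ∈ Set.Ioc (0 : ℝ) 1)
    (s : ℝ) (hs : s ∈ Set.Ioo (0 : ℝ) 1) :
    (∀ z ∈ Set.Ioo (0 : ℝ) 1,
      Summable fun k : ℕ =>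
        (∏ j : Fin (n + 1),
          (ascPochhammer ℝ k).eval (a j + s) / (ascPochhammer ℝ k).eval (1 + s)) * z ^ k) ∧
    ∀ z ∈ Set.Ioo (0 : ℝ) 1, hgL n a (PhiFrob n a s) z = s ^ (n + 1) * z ^ s := by
  obtain ⟨hs0, hs1⟩ := hs
  set c : ℕ → ℝ := fun k => ∏ j : Fin (n + 1),
    (ascPochhammer ℝ k).eval (a j + s) / (ascPochhammer ℝ k).eval (1 + s) with hcdef
  have hden : ∀ k : ℕ, (0:ℝ) < (ascPochhammer ℝ k).eval (1 + s) :=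
    fun k => ascPochhammer_pos k _ (by linarith)
  have hfac : ∀ (k : ℕ) (j : Fin (n + 1)),
      0 < (ascPochhammer ℝ k).eval (a j + s) / (ascPochhammer ℝ k).eval (1 + s) ∧
      (ascPochhammer ℝ k).eval (a j + s) / (ascPochhammer ℝ k).eval (1 + s) ≤ 1 := by
    intro k j
    have hja := (ha j).1
    have hnum : (0:ℝ) < (ascPochhammer ℝ k).eval (a j + s) :=
      ascPochhammer_pos k _ (by linarith)
    exact ⟨div_pos hnum (hden k), by
      rw [div_le_one (hden k)]
      exact poch_mono k (by linarith) (by linarith [(ha j).2])⟩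
  have hc_pos : ∀ k, 0 < c k := fun k => Finset.prod_pos fun j _ => (hfac k j).1
  have hc_le : ∀ k, c k ≤ 1 := fun k =>
    Finset.prod_le_one (fun j _ => (hfac k j).1.le) (fun j _ => (hfac k j).2)
  have hcg : MyGood c := myGood_of_le_one fun k => by
    rw [abs_of_pos (hc_pos k)]; exact hc_le k
  have hc0 : c 0 = 1 := by
    simp [hcdef, ascPochhammer_zero, div_self (hden 0).ne']
  refine ⟨fun z hz => ?_, fun z hz => ?_⟩
  · refine Summable.of_norm ((hcg z hz).congr fun k => ?_)
    rw [norm_mul, Real.norm_eq_abs, Real.norm_eq_abs, abs_of_nonneg (pow_nonneg hz.1.le k)]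
  · -- main identity
    have hPhi : Set.EqOn (PhiFrob n a s) (myS s c) (Set.Ioo (0:ℝ) 1) := by
      intro w hw
      show w ^ s * _ = _
      rw [myS, ← tsum_mul_left]
      refine tsum_congr fun k => ?_
      rw [Real.rpow_add hw.1, Real.rpow_natCast]
      ring
    set d : ℕ → ℝ := fun k => ((k : ℝ) + s) ^ (n + 1) * c k with hddef
    set e : ℕ → ℝ := fun k => (∏ j : Fin (n + 1), ((k : ℝ) + s + a j)) * c k with hedef
    have key : ∀ k : ℕ, e k = d (k + 1) := by
      intro k
      have h1k : ((1:ℝ) + s + (k : ℝ)) ≠ 0 := by positivity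
      have hdk := (hden k).ne'
      show (∏ j : Fin (n + 1), ((k : ℝ) + s + a j)) * c k
          = (((k + 1 : ℕ) : ℝ) + s) ^ (n + 1) * c (k + 1)
      rw [hcdef]
      calc (∏ j : Fin (n + 1), ((k : ℝ) + s + a j)) *
            ∏ j : Fin (n + 1),
              (ascPochhammer ℝ k).eval (a j + s) / (ascPochhammer ℝ k).eval (1 + s)
          = ∏ j : Fin (n + 1), (((k : ℝ) + s + a j) *
              ((ascPochhammer ℝ k).eval (a j + s) / (ascPochhammer ℝ k).eval (1 + s))) :=
            (Finset.prod_mul_distrib).symm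
        _ = ∏ j : Fin (n + 1), (((1:ℝ) + s + (k : ℝ)) *
              ((ascPochhammer ℝ (k + 1)).eval (a j + s) /
                (ascPochhammer ℝ (k + 1)).eval (1 + s))) := by
            refine Finset.prod_congr rfl fun j _ => ?_
            rw [ascPochhammer_succ_eval, ascPochhammer_succ_eval]
            field_simp
            ring
        _ = ((1:ℝ) + s + (k : ℝ)) ^ (n + 1) *
            ∏ j : Fin (n + 1),
              (ascPochhammer ℝ (k + 1)).eval (a j + s) /
                (ascPochhammer ℝ (k + 1)).eval (1 + s) := by
            rw [Finset.prod_mul_distrib, Finset.prod_const, Finset.card_univ,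
              Fintype.card_fin]
        _ = (((k + 1 : ℕ) : ℝ) + s) ^ (n + 1) *
            ∏ j : Fin (n + 1),
              (ascPochhammer ℝ (k + 1)).eval (a j + s) /
                (ascPochhammer ℝ (k + 1)).eval (1 + s) := by
            rw [show ((k + 1 : ℕ) : ℝ) + s = (1:ℝ) + s + (k : ℝ) by push_cast; ring]
    have hterm1 : (Dop^[n + 1] (PhiFrob n a s)) z = myS s d z := by
      rw [eqOn_Dop_iterate (n + 1) hPhi hz, myS_Dop_iterate hs0 hs1 (n + 1) c hcg hz]
    have hterm2 : ((List.ofFn fun j : Fin (n + 1) =>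
        (fun g : ℝ → ℝ => fun w => Dop g w + a j * g w)).foldr (· ∘ ·) id
          (PhiFrob n a s)) z = myS s e z := by
      have hlist : (List.ofFn fun j : Fin (n + 1) =>
          (fun g : ℝ → ℝ => fun w => Dop g w + a j * g w))
          = (List.ofFn a).map (fun aj => fun g : ℝ → ℝ => fun w => Dop g w + aj * g w) := by
        rw [List.map_ofFn]; rfl
      rw [hlist, foldr_eqOn hs0 hs1 (List.ofFn a) c hcg (PhiFrob n a s) hPhi hz]
      simp only [myS, hedef, List.map_ofFn, List.prod_ofFn, Function.comp]
    have hd_good : MyGood d := hddef ▸ hcg.pow_linear s (n + 1)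
    have hsum_d : Summable fun k : ℕ => d k * z ^ ((k : ℝ) + s) := myS_summable hd_good hz
    have hzts : z * myS s e z = ∑' k : ℕ, d (k + 1) * z ^ (((k + 1 : ℕ) : ℝ) + s) := by
      rw [myS, ← tsum_mul_left]
      refine tsum_congr fun k => ?_
      rw [key k]
      have hzz : z ^ (((k + 1 : ℕ) : ℝ) + s) = z ^ ((k : ℝ) + s) * z := by
        rw [show ((k + 1 : ℕ) : ℝ) + s = ((k : ℝ) + s) + 1 by push_cast; ring,
          Real.rpow_add_one hz.1.ne']
      rw [hzz]
      ring
    show (Dop^[n + 1] (PhiFrob n a s)) z - z * _ = s ^ (n + 1) * z ^ s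
    rw [hterm1, hterm2, hzts, myS, Summable.tsum_eq_zero_add hsum_d]
    have hz0 : z ^ (((0 : ℕ) : ℝ) + s) = z ^ s := by norm_num
    have hd0 : d 0 = s ^ (n + 1) := by
      rw [hddef]
      simp [hc0]
    rw [hz0] at *
    simp only [Nat.cast_zero, zero_add] at *
    rw [hd0]
    ring
end

section
/- Let n ≥ 0 be an integer, 𝔞₁,…,𝔞_{n+1} ∈ (0,1] real numbers, and r ≥ 2 an integer. Suppose 0 < ρ ≤ 1 and (d_k)_{k≥0} is a sequence of complex numbers such that the power series h(w) = ∑_{k≥0} d_k w^k converges for |w| < ρ, and such that the function F(z) := h(z^{1/r}) satisfies (L F)(z) = z^{1/r} for all z ∈ (0, ρ^r) and d₀ = 0. Then F(z) = W_r(z) for all z ∈ (0, ρ^r), where W_r(z) := ∑_{k≥0} (∏_{j=1}^{n+1} [𝔞_j + 1/r]_k / [1/r]_{k+1}) · z^{k+1/r}. In other words, W_r is the unique solution of L(·) = z^{1/r}, analytic in z^{1/r} near 0, which vanishes at 0. -/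
open scoped BigOperators

/-- The Euler operator `D = z · d/dz` acting on complex-valued functions of a real variable. -/
noncomputable def DopC (f : ℝ → ℂ) : ℝ → ℂ := fun z => (z : ℂ) * deriv f z

/-- The hypergeometric differential operator
`L = D^{n+1} − z·∏_{j=1}^{n+1}(D + 𝔞_j)` attached to indices `(𝔞₁,…,𝔞_{n+1}; 1,…,1)`,
acting on complex-valued functions of a real variable. -/
noncomputable def hgLC (n : ℕ) (a : Fin (n + 1) → ℝ) (f : ℝ → ℂ) : ℝ → ℂ := fun z =>
  (DopC^[n + 1] f) z -
    (z : ℂ) * ((List.ofFn fun j : Fin (n + 1) =>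
      (fun g : ℝ → ℂ => fun w => DopC g w + (a j : ℂ) * g w)).foldr (· ∘ ·) id f z)

/-!
Substituting `z = w ^ r` turns `D` into `(1/r) · w d/dw`, which acts on a power series
`∑ d_k w^k` by multiplying `d_k` by `k / r`. So `L F = z^{1/r}` becomes an identity between two
power series in `w` on the interval `(0, ρ)`, which by the identity theorem holds coefficientwise:
`(k/r)^{n+1} d_k = ∏_j ((k - r)/r + 𝔞_j) d_{k-r} + [k = 1]`. As `d_0 = 0` and `r ≥ 2`, this
recursion forces `d_k = 0` unless `k ≡ 1 (mod r)`, and `d_{qr+1}` satisfies the recursion of the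
coefficients of `W_r`, whose initial value is `r^{n+1}`.
-/

open Filter Set Topology

def SummableOnBall (ρ : ℝ) (u : ℕ → ℂ) : Prop :=
  ∀ w : ℂ, ‖w‖ < ρ → Summable fun k => u k * w ^ k

namespace SummableOnBall

variable {ρ : ℝ} {u v : ℕ → ℂ}

/-- Summability at a larger radius bounds the terms, which leaves a geometric factor to absorb
the linear growth of `v`. -/
theorem summable_norm_mul {C : ℝ} (hu : SummableOnBall ρ u) (hv : ∀ k, ‖v k‖ ≤ C * (k + 1))
    {t : ℝ} (ht : 0 ≤ t) (htρ : t < ρ) : Summable fun k => ‖v k * u k‖ * t ^ k := by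
  obtain ⟨s, hts, hsρ⟩ := exists_between htρ
  have hs : 0 < s := ht.trans_lt hts
  obtain ⟨B, hB⟩ : BddAbove (range fun k => ‖u k * (s : ℂ) ^ k‖) :=
    (hu s (by rwa [Complex.norm_real, Real.norm_of_nonneg hs.le])).tendsto_atTop_zero.norm
      |>.bddAbove_range
  have hq : ‖t / s‖ < 1 := by
    rwa [Real.norm_of_nonneg (by positivity), div_lt_one hs]
  have hgeom : Summable fun k : ℕ => C * B * (((k : ℝ) ^ 1 * (t / s) ^ k) + (t / s) ^ k) :=
    ((summable_pow_mul_geometric_of_norm_lt_one 1 hq).add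
      (summable_geometric_of_norm_lt_one hq)).mul_left _
  refine hgeom.of_nonneg_of_le (fun k => by positivity) fun k => ?_
  have hBk : ‖u k‖ * s ^ k ≤ B := by
    simpa [norm_mul, Complex.norm_real, Real.norm_of_nonneg hs.le] using hB ⟨k, rfl⟩
  calc ‖v k * u k‖ * t ^ k = ‖v k‖ * (‖u k‖ * s ^ k) * (t / s) ^ k := by
        rw [norm_mul, div_pow]; field_simp
    _ ≤ C * (k + 1) * B * (t / s) ^ k := by
        gcongr
        · exact (norm_nonneg _).trans (hv k)
        · exact hv k
    _ = C * B * (((k : ℝ) ^ 1 * (t / s) ^ k) + (t / s) ^ k) := by ring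

theorem mul {C : ℝ} (hu : SummableOnBall ρ u) (hv : ∀ k, ‖v k‖ ≤ C * (k + 1)) :
    SummableOnBall ρ fun k => v k * u k := fun w hw =>
  Summable.of_norm <| (hu.summable_norm_mul hv (norm_nonneg w) hw).congr fun k => by
    simp only [norm_mul, norm_pow]

theorem add (hu : SummableOnBall ρ u) (hv : SummableOnBall ρ v) :
    SummableOnBall ρ fun k => u k + v k := fun w hw =>
  ((hu w hw).add (hv w hw)).congr fun k => by ring

theorem const_mul (hu : SummableOnBall ρ u) (b : ℂ) : SummableOnBall ρ fun k => b * u k :=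
  hu.mul (C := ‖b‖) fun k =>
    le_mul_of_one_le_right (norm_nonneg b) (by linarith [k.cast_nonneg (α := ℝ)])

theorem shift (hu : SummableOnBall ρ u) (r : ℕ) :
    SummableOnBall ρ fun k => if r ≤ k then u (k - r) else 0 := fun w hw => by
  rw [← summable_nat_add_iff r]
  refine ((hu w hw).mul_right (w ^ r)).congr fun k => ?_
  simp [pow_add, mul_assoc]

theorem single (i : ℕ) (c : ℂ) : SummableOnBall ρ fun k => if k = i then c else 0 := fun _ _ =>
  summable_of_ne_finset_zero (s := {i}) fun k hk => by simp_all

theorem hasFPowerSeriesAt (hρ : 0 < ρ) (hu : SummableOnBall ρ u) :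
    HasFPowerSeriesAt (fun w : ℂ => ∑' k, u k * w ^ k) (.ofScalars ℂ u) 0 := by
  set p := FormalMultilinearSeries.ofScalars ℂ u
  have hsum : Summable fun k => ‖p k‖ * ((ρ / 2).toNNReal : ℝ) ^ k := by
    have := hu.summable_norm_mul (v := 1) (C := 1) (fun k => by simp) (t := ρ / 2)
      (by positivity) (by linarith)
    rw [Real.coe_toNNReal _ (by positivity)]
    simpa [p, FormalMultilinearSeries.ofScalars_norm] using this
  have hp : 0 < p.radius :=
    lt_of_lt_of_le (by simpa using hρ) (p.le_radius_of_summable_norm hsum)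
  have hsum_eq : p.sum = fun w : ℂ => ∑' k, u k * w ^ k :=
    funext fun w => FormalMultilinearSeries.ofScalars_sum_eq u w
  exact hsum_eq ▸ (p.hasFPowerSeriesOnBall hp).hasFPowerSeriesAt

/-- The interval `(0, ρ)` accumulates at `0`, so the identity theorem applies. -/
theorem eq_of_tsum_eq (hρ : 0 < ρ) (hu : SummableOnBall ρ u) (hv : SummableOnBall ρ v)
    (h : ∀ x ∈ Ioo 0 ρ, ∑' k, u k * (x : ℂ) ^ k = ∑' k, v k * (x : ℂ) ^ k) : u = v := by
  have hreal : Tendsto (fun x : ℝ => (x : ℂ)) (𝓝[>] 0) (𝓝[≠] 0) :=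
    tendsto_nhdsWithin_iff.2 ⟨(Complex.continuous_ofReal.tendsto' 0 0 (by simp)).mono_left
      nhdsWithin_le_nhds, eventually_nhdsWithin_of_forall fun x hx => by simpa using hx.ne'⟩
  have hfreq : ∃ᶠ w in 𝓝[≠] (0 : ℂ), ∑' k, u k * w ^ k = ∑' k, v k * w ^ k :=
    hreal.frequently (Filter.Eventually.frequently
      (Filter.mem_of_superset (Ioo_mem_nhdsGT hρ) fun x hx => h x hx))
  have hu' := hu.hasFPowerSeriesAt hρ
  have hv' := hv.hasFPowerSeriesAt hρ
  exact FormalMultilinearSeries.ofScalars_series_injective ℂ ℂ <|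
    hu'.eq_formalMultilinearSeries_of_eventually hv'
      ((hu'.analyticAt.frequently_eq_iff_eventually_eq hv'.analyticAt).1 hfreq)

theorem hasDerivAt_tsum (hu : SummableOnBall ρ u) {x : ℝ} (hx : 0 < x) (hxρ : x < ρ) :
    HasDerivAt (fun y : ℝ => ∑' k, u k * (y : ℂ) ^ k) (∑' k, u k * (k * (x : ℂ) ^ (k - 1))) x := by
  obtain ⟨s, hxs, hsρ⟩ := exists_between hxρ
  have hs : 0 < s := hx.trans hxs
  have hbound : Summable fun k : ℕ => ‖(k : ℂ) * u k‖ * s ^ k / s :=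
    (hu.summable_norm_mul (C := 1) (fun k => by simp) hs.le hsρ).div_const s
  refine hasDerivAt_tsum_of_isPreconnected hbound isOpen_Ioo isPreconnected_Ioo
    (fun k y _ => ((hasDerivAt_pow k (y : ℂ)).comp_ofReal).const_mul (u k)) (fun k y hy => ?_)
    (y₀ := x) ⟨hx, hxs⟩ (hu x (by simpa [abs_of_pos hx] using hxρ)) ⟨hx, hxs⟩
  rcases k with _ | k
  · simp
  · simp only [norm_mul, norm_pow, Complex.norm_real, Complex.norm_natCast, Nat.add_sub_cancel,
      Real.norm_of_nonneg hy.1.le, pow_succ]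
    field_simp
    gcongr
    exacts [hy.1.le, hy.2.le]

end SummableOnBall

theorem mul_tsum_deriv_pow_eq (u : ℕ → ℂ) (x : ℂ) :
    x * ∑' k, u k * (k * x ^ (k - 1)) = ∑' k, k * u k * x ^ k := by
  rw [← tsum_mul_left]
  congr 1 with k
  rcases k with _ | k
  · simp
  · rw [Nat.add_sub_cancel, pow_succ]; ring

theorem tsum_shift_mul (u : ℕ → ℂ) (r : ℕ) (x : ℂ) :
    ∑' k, (if r ≤ k then u (k - r) else 0) * x ^ k = x ^ r * ∑' k, u k * x ^ k := by
  have hsupp : (Function.support fun k => (if r ≤ k then u (k - r) else 0) * x ^ k) ⊆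
      range (· + r) := fun k hk =>
    ⟨k - r, Nat.sub_add_cancel (by by_contra h; simp [h] at hk)⟩
  rw [← (add_left_injective r).tsum_eq hsupp, ← tsum_mul_left]
  congr 1 with k
  simp [pow_add, mul_comm, mul_left_comm]

theorem DopC_congr {s : Set ℝ} (hs : IsOpen s) {f g : ℝ → ℂ} (h : EqOn f g s) :
    EqOn (DopC f) (DopC g) s := fun z hz => by
  simp only [DopC, (eventuallyEq_of_mem (hs.mem_nhds hz) h).deriv_eq]

noncomputable def rootSeries (r : ℕ) (u : ℕ → ℂ) (z : ℝ) : ℂ :=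
  ∑' k, u k * ((z ^ (1 / (r : ℝ)) : ℝ) : ℂ) ^ k

section RootSeries

variable {ρ : ℝ} {r : ℕ} {z : ℝ}

theorem rpow_one_div_mem_Ioo (hρ : 0 ≤ ρ) (hr : r ≠ 0) (hz : z ∈ Ioo 0 (ρ ^ r)) :
    z ^ (1 / (r : ℝ)) ∈ Ioo 0 ρ := by
  refine ⟨Real.rpow_pos_of_pos hz.1 _, ?_⟩
  rw [one_div, Real.rpow_inv_lt_iff_of_pos hz.1.le hρ (by positivity), Real.rpow_natCast]
  exact hz.2

theorem rootSeries_pow (r : ℕ) (hr : r ≠ 0) (u : ℕ → ℂ) {x : ℝ} (hx : 0 ≤ x) :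
    rootSeries r u (x ^ r) = ∑' k, u k * (x : ℂ) ^ k := by
  rw [rootSeries, one_div, Real.pow_rpow_inv_natCast hx hr]

theorem DopC_rootSeries (hρ : 0 ≤ ρ) (hr : r ≠ 0) {u : ℕ → ℂ} (hu : SummableOnBall ρ u)
    (hz : z ∈ Ioo 0 (ρ ^ r)) :
    DopC (rootSeries r u) z = rootSeries r (fun k => (k / r) * u k) z := by
  set w := z ^ (1 / (r : ℝ))
  obtain ⟨hw, hwρ⟩ := rpow_one_div_mem_Ioo hρ hr hz
  have hroot : HasDerivAt (fun y : ℝ => y ^ (1 / (r : ℝ))) (1 / r * (w / z)) z := by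
    simpa [w, Real.rpow_sub_one hz.1.ne'] using
      Real.hasDerivAt_rpow_const (p := 1 / (r : ℝ)) (Or.inl hz.1.ne')
  have hderiv := (hu.hasDerivAt_tsum hw hwρ).scomp z hroot
  rw [DopC, show rootSeries r u = (fun y : ℝ => ∑' k, u k * (y : ℂ) ^ k) ∘
    fun y : ℝ => y ^ (1 / (r : ℝ)) from rfl, hderiv.deriv, Complex.real_smul]
  calc (z : ℂ) * (((1 / r * (w / z) : ℝ) : ℂ) * ∑' k, u k * (k * (w : ℂ) ^ (k - 1)))
      = 1 / r * ((w : ℂ) * ∑' k, u k * (k * (w : ℂ) ^ (k - 1))) := by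
        have hz0 : (z : ℂ) ≠ 0 := by exact_mod_cast hz.1.ne'
        push_cast; field_simp
    _ = rootSeries r (fun k => (k / r) * u k) z := by
        rw [mul_tsum_deriv_pow_eq, rootSeries, ← tsum_mul_left]
        congr 1 with k
        ring

theorem rootSeries_add (hρ : 0 ≤ ρ) (hr : r ≠ 0) {u v : ℕ → ℂ} (hu : SummableOnBall ρ u)
    (hv : SummableOnBall ρ v) (hz : z ∈ Ioo 0 (ρ ^ r)) :
    rootSeries r (fun k => u k + v k) z = rootSeries r u z + rootSeries r v z := by
  obtain ⟨hw, hwρ⟩ := rpow_one_div_mem_Ioo hρ hr hz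
  have hnorm : ‖((z ^ (1 / (r : ℝ)) : ℝ) : ℂ)‖ < ρ := by
    rwa [Complex.norm_real, Real.norm_of_nonneg hw.le]
  rw [rootSeries, rootSeries, rootSeries, ← (hu _ hnorm).tsum_add (hv _ hnorm)]
  congr 1 with k
  ring

theorem rootSeries_const_mul (b : ℂ) (u : ℕ → ℂ) :
    rootSeries r (fun k => b * u k) z = b * rootSeries r u z := by
  rw [rootSeries, rootSeries, ← tsum_mul_left]
  congr 1 with k
  ring

end RootSeries

/-- Quantifying over every `g` that agrees with the series on the interval is what lets such
operators be composed: `DopC (rootSeries r u)` is itself a root series only on `(0, ρ ^ r)`. -/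
def ActsOnRootSeries (ρ : ℝ) (r : ℕ) (T : (ℝ → ℂ) → ℝ → ℂ) (μ : ℕ → ℂ) : Prop :=
  ∀ u g, SummableOnBall ρ u → EqOn g (rootSeries r u) (Ioo 0 (ρ ^ r)) →
    SummableOnBall ρ (fun k => μ k * u k) ∧
      EqOn (T g) (rootSeries r fun k => μ k * u k) (Ioo 0 (ρ ^ r))

namespace ActsOnRootSeries

variable {ρ : ℝ} {r : ℕ} {T T' : (ℝ → ℂ) → ℝ → ℂ} {μ μ' : ℕ → ℂ}

theorem id : ActsOnRootSeries ρ r _root_.id fun _ => 1 := fun u g hu hg => by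
  simpa using ⟨hu, hg⟩

theorem comp (h : ActsOnRootSeries ρ r T μ) (h' : ActsOnRootSeries ρ r T' μ') :
    ActsOnRootSeries ρ r (T ∘ T') fun k => μ k * μ' k := fun u g hu hg => by
  obtain ⟨hu', hg'⟩ := h' u g hu hg
  simpa only [mul_assoc, Function.comp_apply] using h _ _ hu' hg'

theorem iterate (h : ActsOnRootSeries ρ r T μ) (m : ℕ) :
    ActsOnRootSeries ρ r T^[m] fun k => μ k ^ m := by
  induction m with
  | zero => simpa using id
  | succ m ih =>
    rw [Function.iterate_succ']
    simpa only [pow_succ', mul_comm] using h.comp ih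

theorem foldr_ofFn {m : ℕ} {T : Fin m → (ℝ → ℂ) → ℝ → ℂ} {μ : Fin m → ℕ → ℂ}
    (h : ∀ j, ActsOnRootSeries ρ r (T j) (μ j)) :
    ActsOnRootSeries ρ r ((List.ofFn T).foldr (· ∘ ·) _root_.id) fun k => ∏ j, μ j k := by
  induction m with
  | zero => simpa using id
  | succ m ih =>
    simpa only [List.ofFn_succ, List.foldr_cons, Fin.prod_univ_succ] using
      (h 0).comp (ih fun j => h j.succ)

theorem add_const_mul (hρ : 0 ≤ ρ) (hr : r ≠ 0) (h : ActsOnRootSeries ρ r T μ) (b : ℂ) :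
    ActsOnRootSeries ρ r (fun g z => T g z + b * g z) fun k => μ k + b := fun u g hu hg => by
  obtain ⟨hu', hg'⟩ := h u g hu hg
  have hcoeff : (fun k => (μ k + b) * u k) = fun k => μ k * u k + b * u k := by
    ext k; ring
  refine ⟨hcoeff ▸ hu'.add (hu.const_mul b), fun z hz => ?_⟩
  show T g z + b * g z = _
  rw [hcoeff, rootSeries_add hρ hr hu' (hu.const_mul b) hz, rootSeries_const_mul, hg' hz, hg hz]

end ActsOnRootSeries

theorem actsOnRootSeries_DopC {ρ : ℝ} {r : ℕ} (hρ : 0 ≤ ρ) (hr : r ≠ 0) :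
    ActsOnRootSeries ρ r DopC fun k => k / r := fun u g hu hg => by
  refine ⟨hu.mul (C := 1) fun k => ?_, fun z hz => ?_⟩
  · rw [norm_div, Complex.norm_natCast, Complex.norm_natCast, one_mul]
    have : (1 : ℝ) ≤ r := by exact_mod_cast Nat.one_le_iff_ne_zero.2 hr
    exact (div_le_self k.cast_nonneg this).trans (by linarith)
  · rw [DopC_congr isOpen_Ioo hg hz, DopC_rootSeries hρ hr hu hz]

theorem coeff_recurrence_of_hgLC_rootSeries {n : ℕ} {a : Fin (n + 1) → ℝ} {r : ℕ} (hr : r ≠ 0)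
    {ρ : ℝ} (hρ : 0 < ρ) {d : ℕ → ℂ} (hd : SummableOnBall ρ d)
    (hL : ∀ z ∈ Ioo 0 (ρ ^ r), hgLC n a (rootSeries r d) z = ((z ^ (1 / (r : ℝ)) : ℝ) : ℂ))
    (k : ℕ) :
    ((k : ℂ) / r) ^ (n + 1) * d k =
      (if r ≤ k then (∏ j, (((k - r : ℕ) : ℂ) / r + a j)) * d (k - r) else 0) +
        if k = 1 then 1 else 0 := by
  obtain ⟨hP₁, hDd⟩ := (actsOnRootSeries_DopC hρ.le hr).iterate (n + 1) d _ hd (eqOn_refl _ _)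
  obtain ⟨hP₂, hEd⟩ := ActsOnRootSeries.foldr_ofFn
    (T := fun j g z => DopC g z + (a j : ℂ) * g z)
    (fun j => (actsOnRootSeries_DopC hρ.le hr).add_const_mul hρ.le hr (a j)) d _ hd (eqOn_refl _ _)
  set P₁ : ℕ → ℂ := fun k => ((k : ℂ) / r) ^ (n + 1) * d k
  set P₂ : ℕ → ℂ := fun k => (∏ j, ((k : ℂ) / r + a j)) * d k
  have hshift := hP₂.shift r
  refine congrFun (SummableOnBall.eq_of_tsum_eq (u := P₁) hρ hP₁ (hshift.add (.single 1 1))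
    fun x hx => ?_) k
  have hxr : x ^ r ∈ Ioo 0 (ρ ^ r) := ⟨pow_pos hx.1 r, pow_lt_pow_left₀ hx.2 hx.1.le hr⟩
  have hnorm : ‖(x : ℂ)‖ < ρ := by rw [Complex.norm_real, Real.norm_of_nonneg hx.1.le]; exact hx.2
  have hLx := hL _ hxr
  rw [hgLC, hDd hxr, hEd hxr, rootSeries_pow r hr _ hx.1.le, rootSeries_pow r hr _ hx.1.le,
    one_div, Real.pow_rpow_inv_natCast hx.1.le hr] at hLx
  simp_rw [add_mul]
  have hδ : ∑' k, (if k = 1 then (1 : ℂ) else 0) * (x : ℂ) ^ k = x := by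
    rw [tsum_eq_single 1 fun k hk => by simp [hk]]; simp
  rw [(hshift _ hnorm).tsum_add (SummableOnBall.single 1 1 _ hnorm), tsum_shift_mul, hδ]
  push_cast at hLx
  simp only [P₁, P₂] at hLx ⊢
  linear_combination hLx

theorem ascPochhammer_eval_div_succ {x t : ℝ} (ht : 0 < t) (m : ℕ) :
    (t + (m + 1)) * ((ascPochhammer ℝ (m + 1)).eval x / (ascPochhammer ℝ (m + 2)).eval t) =
      (x + m) * ((ascPochhammer ℝ m).eval x / (ascPochhammer ℝ (m + 1)).eval t) := by
  have hpos := ascPochhammer_pos (m + 1) t ht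
  rw [ascPochhammer_succ_eval (m + 1) t, ascPochhammer_succ_eval m x]
  push_cast
  field_simp

noncomputable def wrCoeff (n : ℕ) (a : Fin (n + 1) → ℝ) (r m : ℕ) : ℝ :=
  ∏ j : Fin (n + 1),
    (ascPochhammer ℝ m).eval (a j + 1 / (r : ℝ)) / (ascPochhammer ℝ (m + 1)).eval (1 / (r : ℝ))

theorem Wr_eq_tsum (n : ℕ) (a : Fin (n + 1) → ℝ) (r : ℕ) (z : ℝ) :
    Wr n a r z = ∑' m, wrCoeff n a r m * z ^ ((m : ℝ) + 1 / (r : ℝ)) := rfl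

theorem wrCoeff_zero (n : ℕ) (a : Fin (n + 1) → ℝ) (r : ℕ) : wrCoeff n a r 0 = r ^ (n + 1) := by
  simp [wrCoeff]

theorem wrCoeff_succ (n : ℕ) (a : Fin (n + 1) → ℝ) {r : ℕ} (hr : r ≠ 0) (m : ℕ) :
    (m + 1 + 1 / (r : ℝ)) ^ (n + 1) * wrCoeff n a r (m + 1) =
      (∏ j, (m + 1 / (r : ℝ) + a j)) * wrCoeff n a r m := by
  have ht : (0 : ℝ) < 1 / r := by positivity
  rw [wrCoeff, wrCoeff, ← Finset.prod_mul_distrib, ← Fin.prod_const, ← Finset.prod_mul_distrib]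
  refine Finset.prod_congr rfl fun j _ => ?_
  rw [show (m : ℝ) + 1 + 1 / r = 1 / r + (m + 1) by ring, ascPochhammer_eval_div_succ ht]
  ring

theorem eq_wrCoeff_of_recurrence {n : ℕ} {a : Fin (n + 1) → ℝ} {r : ℕ} (hr : 2 ≤ r)
    {d : ℕ → ℂ} (hd0 : d 0 = 0)
    (hrec : ∀ k : ℕ, ((k : ℂ) / r) ^ (n + 1) * d k =
      (if r ≤ k then (∏ j, (((k - r : ℕ) : ℂ) / r + a j)) * d (k - r) else 0) +
        if k = 1 then 1 else 0)
    (q : ℕ) {i : ℕ} (hi : i < r) : d (q * r + i) = if i = 1 then (wrCoeff n a r q : ℂ) else 0 := by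
  have hr0 : (r : ℂ) ≠ 0 := by norm_cast; omega
  have hlead : ∀ k : ℕ, k ≠ 0 → ((k : ℂ) / r) ^ (n + 1) ≠ 0 := fun k hk => by
    have : (k : ℂ) ≠ 0 := by exact_mod_cast hk
    positivity
  induction q with
  | zero =>
    have h := hrec i
    simp only [zero_mul, zero_add, show ¬r ≤ i by omega, if_false] at h ⊢
    rcases Nat.lt_trichotomy i 1 with hi0 | rfl | hi1
    · simp [show i = 0 by omega, hd0]
    · rw [if_pos rfl, wrCoeff_zero]
      push_cast at h ⊢
      rw [one_div, inv_pow] at h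
      exact ((inv_mul_eq_one₀ (pow_ne_zero _ hr0)).1 h).symm
    · rw [if_neg hi1.ne'] at h ⊢
      exact (mul_eq_zero.1 h).resolve_left (hlead i (by omega))
  | succ q ih =>
    have h := hrec ((q + 1) * r + i)
    rw [if_pos (by nlinarith), if_neg (by nlinarith),
      show (q + 1) * r + i - r = q * r + i by rw [add_mul, one_mul]; omega, ih, add_zero] at h
    have hk : ((q + 1) * r + i : ℕ) ≠ 0 := by positivity
    split_ifs with hi1
    · subst hi1
      refine mul_left_cancel₀ (hlead _ hk) (h.trans ?_)
      have hstep := congrArg (fun x : ℝ => (x : ℂ)) (wrCoeff_succ n a (r := r) (by omega) q)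
      push_cast at hstep ⊢
      field_simp at hstep ⊢
      linear_combination -hstep
    · rw [if_neg hi1, mul_zero] at h
      exact (mul_eq_zero.1 h).resolve_left (hlead _ hk)

theorem rootSeries_eq_Wr {n : ℕ} {a : Fin (n + 1) → ℝ} {r : ℕ} (hr : 1 < r) {d : ℕ → ℂ}
    (hd : ∀ q i, i < r → d (q * r + i) = if i = 1 then (wrCoeff n a r q : ℂ) else 0)
    {z : ℝ} (hz : 0 ≤ z) : rootSeries r d z = Wr n a r z := by
  have hinj : Function.Injective fun q => q * r + 1 := fun p q h =>
    Nat.eq_of_mul_eq_mul_right (by omega : 0 < r) (by simpa using h)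
  have hsupp : (Function.support fun k => d k * ((z ^ (1 / (r : ℝ)) : ℝ) : ℂ) ^ k) ⊆
      range fun q => q * r + 1 := fun k hk => by
    by_contra hk'
    have hmod : k % r ≠ 1 := fun h => hk' ⟨k / r, by simp only [← h, Nat.div_add_mod']⟩
    have := hd (k / r) (k % r) (Nat.mod_lt k (by omega))
    rw [Nat.div_add_mod', if_neg hmod] at this
    simp [this] at hk
  rw [rootSeries, Wr_eq_tsum, Complex.ofReal_tsum, ← hinj.tsum_eq hsupp]
  congr 1 with q
  rw [hd q 1 hr, if_pos rfl, ← Complex.ofReal_pow, ← Real.rpow_natCast, ← Real.rpow_mul hz,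
    ← Complex.ofReal_mul]
  congr 3
  push_cast
  field_simp

theorem stmt2_general (n : ℕ) (a : Fin (n + 1) → ℝ)
    (r : ℕ) (hr : 2 ≤ r) (ρ : ℝ) (hρ : 0 < ρ) (d : ℕ → ℂ)
    (hconv : ∀ w : ℂ, ‖w‖ < ρ → Summable fun k : ℕ => d k * w ^ k)
    (F : ℝ → ℂ)
    (hF : ∀ z : ℝ, F z = ∑' k : ℕ, d k * ((z ^ (1 / (r : ℝ)) : ℝ) : ℂ) ^ k)
    (hd0 : d 0 = 0)
    (hLF : ∀ z ∈ Set.Ioo (0 : ℝ) (ρ ^ r), hgLC n a F z = ((z ^ (1 / (r : ℝ)) : ℝ) : ℂ)) :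
    ∀ z ∈ Set.Ioo (0 : ℝ) (ρ ^ r), F z = ((Wr n a r z : ℝ) : ℂ) := by
  have hF : F = rootSeries r d := funext hF
  subst hF
  have hrec := coeff_recurrence_of_hgLC_rootSeries (by omega) hρ hconv hLF
  intro z hz
  exact rootSeries_eq_Wr hr (fun q i hi => eq_wrCoeff_of_recurrence hr hd0 hrec q hi) hz.1.le

/-- `W_r` is the unique solution of `L(·) = z^{1/r}` which is analytic in `z^{1/r}`
near `0` and vanishes at `0`. -/
theorem stmt2 (n : ℕ) (a : Fin (n + 1) → ℝ) (ha : ∀ j, a j ∈ Set.Ioc (0 : ℝ) 1)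
    (r : ℕ) (hr : 2 ≤ r) (ρ : ℝ) (hρ : 0 < ρ) (hρ1 : ρ ≤ 1) (d : ℕ → ℂ)
    (hconv : ∀ w : ℂ, ‖w‖ < ρ → Summable fun k : ℕ => d k * w ^ k)
    (F : ℝ → ℂ)
    (hF : ∀ z : ℝ, F z = ∑' k : ℕ, d k * ((z ^ (1 / (r : ℝ)) : ℝ) : ℂ) ^ k)
    (hd0 : d 0 = 0)
    (hLF : ∀ z ∈ Set.Ioo (0 : ℝ) (ρ ^ r), hgLC n a F z = ((z ^ (1 / (r : ℝ)) : ℝ) : ℂ)) :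
    ∀ z ∈ Set.Ioo (0 : ℝ) (ρ ^ r), F z = ((Wr n a r z : ℝ) : ℂ) :=
  stmt2_general n a r hr ρ hρ d hconv F hF hd0 hLF
end

section
/- For t ∈ (0, 1/4), let x₊(t) and x₋(t) be the two real roots of the quadratic equation x² + (2 − t⁻¹)x + 1 = 0, with x₊(t) > x₋(t) > 0 (explicitly x_±(t) = ((t⁻¹ − 2) ± √(t⁻¹(t⁻¹ − 4)))/2). Then the series ∑_{k≥1} binom(2k,k)·t^k/k converges and log x₊(t) − log x₋(t) = −2·log t − 2·∑_{k≥1} binom(2k,k)·t^k/k. -/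
/-!
The binomial series gives `∑ C(2n,n) zⁿ = (1 - 4z)^(-1/2)` for `|z| < 1/4`, because
`4ⁿ · binom(n - 1/2, n) = C(2n,n)`. Hence `∑_{n ≥ 1} C(2n,n) zⁿ / n`, differentiated termwise,
and `-2 log ((1 + √(1 - 4z)) / 2)` have the same derivative `4 / (√(1 - 4z) (1 + √(1 - 4z)))`,
and both vanish at `0`. With `s = √(1 - 4t)` the two roots are `(1 ± s) / (1 ∓ s)` and
`t = (1 + s)(1 - s) / 4`, so the claim reduces to this closed form of the series.
-/

open Real

theorem summable_mul_pow_of_abs_mul_pow_le {a : ℕ → ℝ} {C r y : ℝ}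
    (ha : ∀ n, |a n| * r ^ n ≤ C) (hy : |y| < r) : Summable fun n ↦ a n * y ^ n := by
  have hr : 0 < r := (abs_nonneg y).trans_lt hy
  refine Summable.of_norm_bounded ((summable_geometric_of_lt_one (by positivity)
    ((div_lt_one hr).2 hy)).mul_left C) fun n ↦ ?_
  calc ‖a n * y ^ n‖ = |a n| * r ^ n * (|y| / r) ^ n := by
        rw [norm_mul, norm_pow, Real.norm_eq_abs, Real.norm_eq_abs, div_pow]; field_simp
    _ ≤ C * (|y| / r) ^ n := by gcongr; exact ha n

theorem hasDerivAt_tsum_mul_pow {a : ℕ → ℝ} {C r y : ℝ}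
    (ha : ∀ n, |a n| * r ^ n ≤ C) (hy : |y| < r) :
    HasDerivAt (fun z ↦ ∑' n, a n * z ^ n) (∑' n, (n + 1) * a (n + 1) * y ^ n) y := by
  obtain ⟨ρ, hyρ, hρr⟩ := exists_between hy
  have hρ : 0 < ρ := (abs_nonneg y).trans_lt hyρ
  have hr : 0 < r := hρ.trans hρr
  have hq : ‖ρ / r‖ < 1 := by
    rw [norm_div, Real.norm_of_nonneg hρ.le, Real.norm_of_nonneg hr.le]
    exact (div_lt_one hr).2 hρr
  have hu : Summable fun n : ℕ ↦ C / ρ * ((n : ℝ) ^ 1 * (ρ / r) ^ n) :=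
    (summable_pow_mul_geometric_of_norm_lt_one 1 hq).mul_left _
  have hbound : ∀ n, ∀ z ∈ Set.Ioo (-ρ) ρ,
      ‖a n * (n * z ^ (n - 1))‖ ≤ C / ρ * ((n : ℝ) ^ 1 * (ρ / r) ^ n) := by
    rintro (_ | n) z hz
    · simp
    calc ‖a (n + 1) * ((n + 1 : ℕ) * z ^ n)‖ ≤ |a (n + 1)| * ((n + 1 : ℕ) * ρ ^ n) := by
          rw [norm_mul, norm_mul, norm_pow, Real.norm_eq_abs, Real.norm_natCast]
          gcongr
          exact (abs_lt.2 hz).le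
      _ = |a (n + 1)| * r ^ (n + 1) / ρ * ((n + 1 : ℕ) ^ 1 * (ρ / r) ^ (n + 1)) := by
          rw [div_pow]; field_simp; ring
      _ ≤ C / ρ * ((n + 1 : ℕ) ^ 1 * (ρ / r) ^ (n + 1)) := by gcongr; exact ha _
  have hyρ' : y ∈ Set.Ioo (-ρ) ρ := abs_lt.1 hyρ
  have hderiv := hasDerivAt_tsum_of_isPreconnected (g := fun n z ↦ a n * z ^ n)
    (g' := fun n z ↦ a n * (n * z ^ (n - 1))) hu isOpen_Ioo isPreconnected_Ioo
    (fun n z _ ↦ (hasDerivAt_pow n z).const_mul (a n)) hbound hyρ'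
    (summable_mul_pow_of_abs_mul_pow_le ha hy) hyρ'
  have hshift :
      ∑' n : ℕ, a n * (n * y ^ (n - 1)) = ∑' n : ℕ, (n + 1) * a (n + 1) * y ^ n := by
    rw [(Summable.of_norm_bounded hu (hbound · y hyρ')).tsum_eq_zero_add]
    simp only [Nat.cast_zero, zero_mul, mul_zero, zero_add, Nat.cast_add_one, add_tsub_cancel_right]
    exact tsum_congr fun n ↦ by ring
  rwa [hshift] at hderiv

-- `1 / 2 + n - 1` is the shape of the coefficients in
-- `one_div_one_sub_rpow_hasFPowerSeriesOnBall_zero`.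
theorem four_pow_mul_choose_half_eq_centralBinom (n : ℕ) :
    (4 : ℝ) ^ n * Ring.choose ((1 / 2 : ℝ) + n - 1) n = n.centralBinom := by
  rw [Ring.choose_eq_smul, Polynomial.descPochhammer_smeval_eq_ascPochhammer,
    show (1 / 2 : ℝ) + n - 1 - n + 1 = 1 / 2 by ring, Polynomial.ascPochhammer_smeval_eq_eval,
    smul_eq_mul]
  induction n with
  | zero => simp
  | succ n ih =>
    have hrec :
        ((n + 1 : ℕ) : ℝ) * (n + 1).centralBinom = 2 * (2 * n + 1) * n.centralBinom := by
      exact_mod_cast Nat.succ_mul_centralBinom_succ n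
    rw [ascPochhammer_succ_eval, Nat.factorial_succ]
    rw [← ih] at hrec
    push_cast at hrec ⊢
    field_simp at hrec ⊢
    linear_combination -2 * hrec

theorem hasSum_centralBinom_mul_pow {z : ℝ} (hz : |z| < 1 / 4) :
    HasSum (fun n ↦ (n.centralBinom : ℝ) * z ^ n) (√(1 - 4 * z))⁻¹ := by
  have h4z : 4 * z ∈ Metric.eball (0 : ℝ) 1 := by
    rw [Metric.mem_eball, edist_zero_right, ← ofReal_norm, ENNReal.ofReal_lt_one,
      Real.norm_eq_abs, abs_mul, abs_of_pos four_pos]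
    linarith
  have hbinom := (one_div_one_sub_rpow_hasFPowerSeriesOnBall_zero (1 / 2)).hasSum h4z
  simp only [FormalMultilinearSeries.ofScalars_apply_eq, smul_eq_mul, zero_add] at hbinom
  have hcoeff : (fun n : ℕ ↦ Ring.choose ((1 / 2 : ℝ) + n - 1) n * (4 * z) ^ n) =
      fun n ↦ (n.centralBinom : ℝ) * z ^ n := by
    ext n
    rw [← four_pow_mul_choose_half_eq_centralBinom, mul_pow]
    ring
  rwa [hcoeff, ← sqrt_eq_rpow, one_div] at hbinom

theorem centralBinom_mul_one_div_four_pow_le_one (n : ℕ) :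
    (n.centralBinom : ℝ) * (1 / 4) ^ n ≤ 1 := by
  rw [div_pow, one_pow, mul_one_div, div_le_one (by positivity)]
  exact_mod_cast n.centralBinom_le_four_pow

theorem tsum_centralBinom_succ_mul_pow {y : ℝ} (hy : |y| < 1 / 4) :
    ∑' n : ℕ, ((n + 1).centralBinom : ℝ) * y ^ n =
      4 / (√(1 - 4 * y) * (1 + √(1 - 4 * y))) := by
  rcases eq_or_ne y 0 with rfl | hy0
  · rw [tsum_eq_single 0 fun n hn ↦ by simp [hn]]
    norm_num [Nat.centralBinom]
  have hs : 0 < √(1 - 4 * y) := sqrt_pos.2 (by linarith [le_abs_self y])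
  have hs2 : √(1 - 4 * y) ^ 2 = 1 - 4 * y := sq_sqrt (by linarith [le_abs_self y])
  have htail := (hasSum_nat_add_iff' 1).2 (hasSum_centralBinom_mul_pow hy)
  have hbound (n : ℕ) : |((n + 1).centralBinom : ℝ)| * (1 / 4) ^ n ≤ 4 := by
    have := centralBinom_mul_one_div_four_pow_le_one (n + 1)
    rw [pow_succ] at this
    rw [abs_of_nonneg (by positivity)]
    linarith
  have hmul := ((summable_mul_pow_of_abs_mul_pow_le hbound hy).hasSum.mul_left y)
  have heq := hmul.unique (htail.congr_fun fun n ↦ by ring)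
  simp only [Finset.range_one, Finset.sum_singleton, Nat.centralBinom_zero, Nat.cast_one,
    pow_zero, mul_one] at heq
  have heq' : y * (∑' n : ℕ, ((n + 1).centralBinom : ℝ) * y ^ n) * √(1 - 4 * y) =
      1 - √(1 - 4 * y) := by
    rw [heq]; field_simp
  rw [eq_div_iff (by positivity)]
  apply mul_left_cancel₀ hy0
  linear_combination (1 + √(1 - 4 * y)) * heq' - hs2

theorem hasDerivAt_neg_two_mul_log_one_add_sqrt_div_two {y : ℝ} (hy : y < 1 / 4) :
    HasDerivAt (fun z ↦ -2 * log ((1 + √(1 - 4 * z)) / 2))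
      (4 / (√(1 - 4 * y) * (1 + √(1 - 4 * y)))) y := by
  have hs : 0 < √(1 - 4 * y) := sqrt_pos.2 (by linarith)
  have hsqrt := ((hasDerivAt_id' y).const_mul 4).const_sub 1 |>.sqrt (by linarith)
  refine (((hsqrt.const_add 1).div_const 2).log (by positivity) |>.const_mul (-2)).congr_deriv ?_
  field_simp

-- The `n = 0` term is `C(0,0) / 0 = 0`.
theorem hasSum_centralBinom_div_mul_pow {z : ℝ} (hz : |z| < 1 / 4) :
    HasSum (fun n : ℕ ↦ (n.centralBinom : ℝ) / n * z ^ n)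
      (-2 * log ((1 + √(1 - 4 * z)) / 2)) := by
  have hbound (n : ℕ) : |(n.centralBinom : ℝ) / n| * (1 / 4) ^ n ≤ 1 := by
    refine le_trans ?_ (centralBinom_mul_one_div_four_pow_le_one n)
    rw [abs_of_nonneg (by positivity)]
    rcases n.eq_zero_or_pos with rfl | hn
    · simp
    gcongr
    exact div_le_self (by positivity) (by exact_mod_cast hn)
  have hderiv (y : ℝ) (hy : y ∈ Set.Ioo (-(1 / 4)) (1 / 4)) :
      HasDerivAt (fun z ↦ ∑' n : ℕ, (n.centralBinom : ℝ) / n * z ^ n)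
        (4 / (√(1 - 4 * y) * (1 + √(1 - 4 * y)))) y := by
    rw [← tsum_centralBinom_succ_mul_pow (abs_lt.2 hy)]
    refine (hasDerivAt_tsum_mul_pow hbound (abs_lt.2 hy)).congr_deriv (tsum_congr fun n ↦ ?_)
    push_cast
    field_simp
  have hlog (y : ℝ) (hy : y ∈ Set.Ioo (-(1 / 4)) (1 / 4)) :=
    hasDerivAt_neg_two_mul_log_one_add_sqrt_div_two hy.2
  have heqOn := isOpen_Ioo.eqOn_of_deriv_eq isPreconnected_Ioo
    (fun y hy ↦ (hderiv y hy).differentiableAt.differentiableWithinAt)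
    (fun y hy ↦ (hlog y hy).differentiableAt.differentiableWithinAt)
    (fun y hy ↦ (hderiv y hy).deriv.trans (hlog y hy).deriv.symm)
    (show (0 : ℝ) ∈ Set.Ioo (-(1 / 4)) (1 / 4) by norm_num)
    (by rw [tsum_eq_single 0 fun n hn ↦ by simp [hn]]; simp)
  rw [← show _ = -2 * log ((1 + √(1 - 4 * z)) / 2) from heqOn (abs_lt.1 hz)]
  exact (summable_mul_pow_of_abs_mul_pow_le hbound hz).hasSum

theorem log_root_sub_log_root_eq {t : ℝ} (ht0 : 0 < t) (ht : t ≤ 1 / 4) :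
    log (((t⁻¹ - 2) + √(t⁻¹ * (t⁻¹ - 4))) / 2) -
        log (((t⁻¹ - 2) - √(t⁻¹ * (t⁻¹ - 4))) / 2) =
      -2 * log t + 4 * log ((1 + √(1 - 4 * t)) / 2) := by
  have hs1 : √(1 - 4 * t) < 1 := by
    rw [sqrt_lt' one_pos]; linarith
  have hs2 : √(1 - 4 * t) ^ 2 = 1 - 4 * t := sq_sqrt (by linarith)
  have hsqrt : √(t⁻¹ * (t⁻¹ - 4)) = √(1 - 4 * t) / t := by
    rw [← sqrt_sq (by positivity : 0 ≤ √(1 - 4 * t) / t), div_pow, hs2]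
    congr 1
    field_simp
  rw [hsqrt]
  set s := √(1 - 4 * t)
  have h1 : 0 < 1 - s := by linarith
  have h2 : 0 < 1 + s := by positivity
  have hplus : ((t⁻¹ - 2) + s / t) / 2 = (1 + s) / (1 - s) := by
    field_simp; linear_combination -hs2
  have hminus : ((t⁻¹ - 2) - s / t) / 2 = (1 - s) / (1 + s) := by
    field_simp; linear_combination -hs2
  have hprod : t = (1 + s) / 2 * ((1 - s) / 2) := by linear_combination hs2 / 4
  rw [hplus, hminus, hprod, log_mul (by positivity) (by positivity)]
  simp only [log_div h1.ne' h2.ne', log_div h2.ne' h1.ne', log_div h1.ne' two_ne_zero,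
    log_div h2.ne' two_ne_zero]
  ring

theorem stmt3_general (t : ℝ) (ht : t ∈ Set.Ioo (0 : ℝ) (1 / 4)) (xp xm : ℝ)
    (hxp : xp = ((t⁻¹ - 2) + Real.sqrt (t⁻¹ * (t⁻¹ - 4))) / 2)
    (hxm : xm = ((t⁻¹ - 2) - Real.sqrt (t⁻¹ * (t⁻¹ - 4))) / 2) :
    (Summable fun k : ℕ =>
      (Nat.choose (2 * (k + 1)) (k + 1) : ℝ) * t ^ (k + 1) / (k + 1)) ∧
    Real.log xp - Real.log xm =
      -2 * Real.log t -
        2 * ∑' k : ℕ, (Nat.choose (2 * (k + 1)) (k + 1) : ℝ) * t ^ (k + 1) / (k + 1) := by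
  obtain ⟨ht0, ht4⟩ := ht
  have hsum := (hasSum_nat_add_iff' 1).2
    (hasSum_centralBinom_div_mul_pow (abs_lt.2 ⟨by linarith, ht4⟩))
  simp only [Finset.range_one, Finset.sum_singleton, Nat.cast_zero, div_zero, zero_mul, sub_zero,
    ← Nat.centralBinom_eq_two_mul_choose] at hsum ⊢
  replace hsum : HasSum (fun k : ℕ ↦ ((k + 1).centralBinom : ℝ) * t ^ (k + 1) / (k + 1)) _ :=
    hsum.congr_fun fun k ↦ by push_cast; ring
  refine ⟨hsum.summable, ?_⟩
  rw [hsum.tsum_eq, hxp, hxm, log_root_sub_log_root_eq ht0 ht4.le]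
  ring

theorem stmt3 (t : ℝ) (ht : t ∈ Set.Ioo (0 : ℝ) (1 / 4)) (xp xm : ℝ)
    (hroots : xp ^ 2 + (2 - t⁻¹) * xp + 1 = 0 ∧ xm ^ 2 + (2 - t⁻¹) * xm + 1 = 0)
    (horder : xp > xm ∧ xm > 0)
    (hxp : xp = ((t⁻¹ - 2) + Real.sqrt (t⁻¹ * (t⁻¹ - 4))) / 2)
    (hxm : xm = ((t⁻¹ - 2) - Real.sqrt (t⁻¹ * (t⁻¹ - 4))) / 2) :
    (Summable fun k : ℕ =>
      (Nat.choose (2 * (k + 1)) (k + 1) : ℝ) * t ^ (k + 1) / (k + 1)) ∧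
    Real.log xp - Real.log xm =
      -2 * Real.log t -
        2 * ∑' k : ℕ, (Nat.choose (2 * (k + 1)) (k + 1) : ℝ) * t ^ (k + 1) / (k + 1) :=
  stmt3_general t ht xp xm hxp hxm
end

section
/- Let n > 5 be an odd integer such that d := n(n−4) is squarefree. Then u := (n − 2 − √d)/2 is a unit in the ring of integers of the real quadratic field K = ℚ(√d), and u is a fundamental unit: every unit of the ring of integers of K equals ± u^m for some integer m. -/
/-!
Put `m = n - 2`, so that `d = n(n - 4) = m² - 4`. Then `u` and `ε = (m + √d)/2` are the roots of
`X² - mX + 1`, hence mutually inverse units. Since `d` is squarefree, every algebraic integer of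
`ℚ(√d)` has the form `(p + q√d)/2` with `p, q ∈ ℤ`. For a unit `x > 1` the product with its
conjugate `x'` is `±1`, so `|x'| < 1` forces `p, q > 0`, and `p² - dq² = ±4` then gives `x ≥ ε`.
Finally the positive units form a subgroup of `ℝ_{>0}` whose least element above `1` is `ε`, so
every unit is `±εᵏ`.
-/

open NumberField Polynomial IntermediateField

theorem Units.exists_zpow_or_neg_zpow_of_forall_le {R : Type*} [Ring R] (φ : R →+* ℝ)
    (hφ : Function.Injective φ) {e : Rˣ} (he : 1 < φ e)
    (hmin : ∀ w : Rˣ, 1 < φ w → φ e ≤ φ w) (v : Rˣ) :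
    ∃ m : ℤ, v = e ^ m ∨ v = -e ^ m := by
  have hzpow (w : Rˣ) (m : ℤ) : φ ↑(w ^ m) = φ w ^ m := by
    have := congrArg Units.val (map_zpow (Units.map φ.toMonoidHom) w m)
    rwa [Units.coe_map, Units.val_zpow_eq_zpow_val, Units.coe_map] at this
  have hpos (w : Rˣ) (hw : 0 < φ w) : ∃ m : ℤ, w = e ^ m := by
    obtain ⟨m, hle, hlt⟩ := exists_mem_Ico_zpow hw he
    have he0 : 0 < φ e ^ m := zpow_pos (by linarith) m
    have hval : φ ↑(w * (e ^ m)⁻¹) = φ w / φ e ^ m := by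
      rw [Units.val_mul, map_mul, ← zpow_neg, hzpow, zpow_neg, div_eq_mul_inv]
    have h1 : 1 ≤ φ ↑(w * (e ^ m)⁻¹) := by rwa [hval, one_le_div he0]
    have h2 : φ ↑(w * (e ^ m)⁻¹) < φ e := by
      rwa [hval, div_lt_iff₀ he0, ← zpow_one_add₀ (by positivity), add_comm]
    have hone : w * (e ^ m)⁻¹ = 1 := by
      refine Units.ext (hφ ?_)
      rw [Units.val_one, map_one]
      by_contra hne
      exact (hmin _ (lt_of_le_of_ne h1 (Ne.symm hne))).not_gt h2
    exact ⟨m, _root_.mul_inv_eq_one.mp hone⟩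
  rcases (Units.map φ.toMonoidHom v).ne_zero.lt_or_gt with hneg | hpos'
  · obtain ⟨m, hm⟩ := hpos (-v) (by simpa using hneg)
    exact ⟨m, Or.inr (neg_eq_iff_eq_neg.mp hm)⟩
  · obtain ⟨m, hm⟩ := hpos v hpos'
    exact ⟨m, Or.inl hm⟩

theorem pos_add_and_pos_sub_of_one_lt {α : Type*} [Field α] [LinearOrder α]
    [IsStrictOrderedRing α] {x y : α} (hx : 1 < x) (hxy : x * y = 1 ∨ x * y = -1) :
    0 < x + y ∧ 0 < x - y := by
  rcases hxy with h | h <;> constructor <;> nlinarith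

theorem add_le_add_mul_of_sq_sub_mul_sq {m p q : ℤ} {s : ℝ} (hm : 5 ≤ m) (hs0 : 0 ≤ s)
    (hs : s ^ 2 = m ^ 2 - 4) (hp : 0 < p) (hq : 0 < q)
    (hpq : p ^ 2 - (m ^ 2 - 4) * q ^ 2 = 4 ∨ p ^ 2 - (m ^ 2 - 4) * q ^ 2 = -4) :
    m + s ≤ p + q * s := by
  have hmR : (5 : ℝ) ≤ m := by exact_mod_cast hm
  have hs_gt : (m : ℝ) - 1 < s := by nlinarith
  rcases (show 1 ≤ q by omega).eq_or_lt with rfl | hq2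
  · -- `p² ∈ {m², m² - 8}`, and `(m - 1)² < m² - 8` as `m ≥ 5`.
    have hmp : m ≤ p := by
      by_contra! hpm
      rcases hpq with h | h <;> nlinarith
    have : (m : ℝ) ≤ p := by exact_mod_cast hmp
    push_cast
    linarith
  · have hpR : (1 : ℝ) ≤ p := by exact_mod_cast hp
    have hqR : (2 : ℝ) ≤ q := by exact_mod_cast hq2
    nlinarith

theorem NumberField.RingOfIntegers.exists_unit_of_sq_sub_mul_add_one_eq_zero {K : Type*}
    [Field K] {x : K} (c : ℤ) (hx : x ^ 2 - c * x + 1 = 0) :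
    ∃ u : (𝓞 K)ˣ, ((u : 𝓞 K) : K) = x ∧ (((u⁻¹ : (𝓞 K)ˣ) : 𝓞 K) : K) = c - x := by
  have hint {y : K} (hy : y ^ 2 - c * y + 1 = 0) : IsIntegral ℤ y :=
    ⟨X ^ 2 - C c * X + 1, by monicity!, by
      simp only [eval₂_add, eval₂_sub, eval₂_mul, eval₂_pow, eval₂_X, eval₂_C, eval₂_one]
      simpa only [eq_intCast] using hy⟩
  let a : 𝓞 K := ⟨x, hint hx⟩
  let b : 𝓞 K := ⟨c - x, hint (by linear_combination hx)⟩
  have hab : a * b = 1 := RingOfIntegers.coe_injective (by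
    change x * (c - x) = 1
    linear_combination -hx)
  exact ⟨⟨a, b, hab, mul_comm b a ▸ hab⟩, rfl, rfl⟩

theorem Rat.den_eq_one_of_intCast_eq_mul_sq {d : ℕ} (hd : Squarefree d) {q : ℚ} {z : ℤ}
    (h : (z : ℚ) = d * q ^ 2) : q.den = 1 := by
  have hz : ((d * q.num.natAbs ^ 2 : ℕ) : ℤ) = z * q.den ^ 2 := by
    push_cast [Int.natCast_natAbs, sq_abs]
    have : ((d * q.num ^ 2 : ℤ) : ℚ) = (z * q.den ^ 2 : ℤ) := by
      push_cast
      rw [h, ← Rat.mul_den_eq_num q]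
      ring
    exact_mod_cast this
  have hdvd : q.den ^ 2 ∣ d * q.num.natAbs ^ 2 := by
    rw [← Int.natCast_dvd_natCast, hz]
    exact dvd_mul_left _ _
  have hcop : (q.den ^ 2).Coprime (q.num.natAbs ^ 2) := Nat.Coprime.pow 2 2 q.reduced.symm
  exact Nat.isUnit_iff.mp (hd _ (sq q.den ▸ hcop.dvd_of_dvd_mul_right hdvd))

theorem exists_intCast_eq_of_isIntegral {L : Type*} [Field L] [CharZero L] {r : ℚ}
    (h : IsIntegral ℤ (r : L)) : ∃ z : ℤ, (z : ℚ) = r :=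
  IsIntegrallyClosed.isIntegral_iff.mp
    ((isIntegral_algebraMap_iff (algebraMap ℚ L).injective).mp h)

namespace RealQuadratic

variable {d : ℕ}

local notation "F" => ℚ⟮√(d : ℝ)⟯

theorem sqrt_mul_self : √(d : ℝ) * √(d : ℝ) = d := Real.mul_self_sqrt d.cast_nonneg

theorem isIntegral_sqrt : IsIntegral ℚ (√(d : ℝ)) :=
  ⟨X ^ 2 - C (d : ℚ), monic_X_pow_sub_C _ two_ne_zero, by simp [sq]⟩

theorem minpoly_sqrt (hd : ¬IsSquare d) : minpoly ℚ (√(d : ℝ)) = X ^ 2 - C (d : ℚ) := by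
  refine (minpoly.eq_of_irreducible_of_monic ?_ (by simp [sq])
    (monic_X_pow_sub_C _ two_ne_zero)).symm
  rw [X_pow_sub_C_irreducible_iff_of_prime Nat.prime_two]
  intro b hb
  apply irrational_sqrt_natCast_iff.mpr hd
  refine ⟨|b|, ?_⟩
  rw [Rat.cast_abs, ← Real.sqrt_sq_eq_abs, ← Rat.cast_pow, hb, Rat.cast_natCast]

noncomputable def conj (hd : ¬IsSquare d) : F →ₐ[ℚ] ℝ :=
  (adjoin.powerBasis isIntegral_sqrt).lift (-√(d : ℝ)) (by
    simp [minpoly_gen, minpoly_sqrt hd, sq])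

theorem conj_gen (hd : ¬IsSquare d) : conj hd (AdjoinSimple.gen ℚ (√(d : ℝ))) = -√(d : ℝ) :=
  PowerBasis.lift_gen _ _ _

theorem exists_eq_add_mul_sqrt {x : ℝ} (hx : x ∈ F) : ∃ a b : ℚ, x = a + b * √(d : ℝ) := by
  rw [← mem_toSubalgebra,
    adjoin_simple_toSubalgebra_of_isAlgebraic isIntegral_sqrt.isAlgebraic] at hx
  induction hx using Algebra.adjoin_induction with
  | mem x hx => exact ⟨0, 1, by simp [Set.mem_singleton_iff.mp hx]⟩
  | algebraMap r => exact ⟨r, 0, by simp⟩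
  | add x y _ _ hx hy =>
    obtain ⟨a, b, rfl⟩ := hx
    obtain ⟨a', b', rfl⟩ := hy
    exact ⟨a + a', b + b', by push_cast; ring⟩
  | mul x y _ _ hx hy =>
    obtain ⟨a, b, rfl⟩ := hx
    obtain ⟨a', b', rfl⟩ := hy
    exact ⟨a * a' + b * b' * d, a * b' + b * a', by
      push_cast
      linear_combination (b * b' : ℝ) * sqrt_mul_self (d := d)⟩

theorem conj_apply (hd : ¬IsSquare d) {x : F} {a b : ℚ} (hx : (x : ℝ) = a + b * √(d : ℝ)) :
    conj hd x = a - b * √(d : ℝ) := by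
  have : x = algebraMap ℚ _ a + algebraMap ℚ _ b * AdjoinSimple.gen ℚ (√(d : ℝ)) :=
    Subtype.ext (by simpa using hx)
  rw [this, map_add, map_mul, AlgHom.commutes, AlgHom.commutes, conj_gen]
  simp [sub_eq_add_neg]

theorem exists_int_add_conj_and_mul_conj (hd : ¬IsSquare d) (x : 𝓞 F) :
    ∃ t N : ℤ, ((x : F) : ℝ) + conj hd x = t ∧ ((x : F) : ℝ) * conj hd x = N := by
  have hx : IsIntegral ℤ ((x : F) : ℝ) :=
    (RingOfIntegers.isIntegral_coe x).map (IsScalarTower.toAlgHom ℤ F ℝ)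
  have hσx : IsIntegral ℤ (conj hd x) :=
    (RingOfIntegers.isIntegral_coe x).map ((conj hd).restrictScalars ℤ)
  obtain ⟨a, b, hab⟩ := exists_eq_add_mul_sqrt (x : F).2
  have htrace : ((x : F) : ℝ) + conj hd x = ((2 * a : ℚ) : ℝ) := by
    rw [conj_apply hd hab, hab]
    push_cast
    ring
  have hnorm : ((x : F) : ℝ) * conj hd x = ((a ^ 2 - d * b ^ 2 : ℚ) : ℝ) := by
    rw [conj_apply hd hab, hab]
    push_cast
    linear_combination (-b ^ 2 : ℝ) * sqrt_mul_self (d := d)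
  obtain ⟨t, ht⟩ := exists_intCast_eq_of_isIntegral (htrace ▸ hx.add hσx)
  obtain ⟨N, hN⟩ := exists_intCast_eq_of_isIntegral (hnorm ▸ hx.mul hσx)
  exact ⟨t, N, by rw [htrace, ← ht]; norm_cast, by rw [hnorm, ← hN]; norm_cast⟩

theorem exists_int_eq_half_add_mul_sqrt (hd : ¬IsSquare d) (hsf : Squarefree d) (x : 𝓞 F) :
    ∃ p q : ℤ, ((x : F) : ℝ) = (p + q * √(d : ℝ)) / 2 ∧
      conj hd x = (p - q * √(d : ℝ)) / 2 := by
  obtain ⟨t, N, ht, hN⟩ := exists_int_add_conj_and_mul_conj hd x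
  obtain ⟨a, b, hab⟩ := exists_eq_add_mul_sqrt (x : F).2
  have hσ := conj_apply hd hab
  have hdisc : ((t ^ 2 - 4 * N : ℤ) : ℚ) = d * (2 * b) ^ 2 := by
    have : ((t ^ 2 - 4 * N : ℤ) : ℝ) = ((d * (2 * b) ^ 2 : ℚ) : ℝ) := by
      push_cast
      rw [← ht, ← hN, hσ, hab]
      linear_combination (4 * b ^ 2 : ℝ) * sqrt_mul_self (d := d)
    exact_mod_cast this
  have hq : (((2 * b).num : ℚ) : ℝ) = 2 * b := by
    rw [Rat.coe_int_num_of_den_eq_one (Rat.den_eq_one_of_intCast_eq_mul_sq hsf hdisc)]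
    push_cast
    ring
  push_cast at hq
  refine ⟨t, (2 * b).num, ?_, ?_⟩ <;>
  · rw [← ht, hσ, hab, hq]
    ring

theorem mul_conj_eq_one_or_eq_neg_one (hd : ¬IsSquare d) (w : (𝓞 F)ˣ) :
    (((w : 𝓞 F) : F) : ℝ) * conj hd (w : 𝓞 F) = 1 ∨
      (((w : 𝓞 F) : F) : ℝ) * conj hd (w : 𝓞 F) = -1 := by
  obtain ⟨-, N, -, hN⟩ := exists_int_add_conj_and_mul_conj hd (w : 𝓞 F)
  obtain ⟨-, N', -, hN'⟩ := exists_int_add_conj_and_mul_conj hd ((w⁻¹ : (𝓞 F)ˣ) : 𝓞 F)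
  have hinv : ((w : 𝓞 F) : F) * (((w⁻¹ : (𝓞 F)ˣ) : 𝓞 F) : F) = 1 := by norm_cast; simp
  have hNN' : N * N' = 1 := by
    have : ((N * N' : ℤ) : ℝ) = 1 := by
      rw [Int.cast_mul, ← hN, ← hN', mul_mul_mul_comm, ← map_mul, ← MulMemClass.coe_mul, hinv,
        map_one, OneMemClass.coe_one, one_mul]
    exact_mod_cast this
  rw [hN]
  rcases Int.isUnit_iff.mp (IsUnit.of_mul_eq_one N' hNN') with rfl | rfl <;> simp

theorem half_add_sqrt_le_of_one_lt {m : ℤ} (hm : 5 ≤ m) (hdm : (d : ℤ) = m ^ 2 - 4)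
    (hd : ¬IsSquare d) (hsf : Squarefree d) (w : (𝓞 F)ˣ) (hw : 1 < (((w : 𝓞 F) : F) : ℝ)) :
    (m + √(d : ℝ)) / 2 ≤ (((w : 𝓞 F) : F) : ℝ) := by
  obtain ⟨p, q, hx, hσx⟩ := exists_int_eq_half_add_mul_sqrt hd hsf (w : 𝓞 F)
  have hnorm := mul_conj_eq_one_or_eq_neg_one hd w
  obtain ⟨hp, hq⟩ := pos_add_and_pos_sub_of_one_lt hw hnorm
  rw [hx, hσx] at hp hq hnorm
  rw [hx]
  have hdR : (d : ℝ) = (m : ℝ) ^ 2 - 4 := by exact_mod_cast hdm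
  have hs : √(d : ℝ) ^ 2 = (m : ℝ) ^ 2 - 4 := by rw [sq, sqrt_mul_self, hdR]
  have hs0 : 0 < √(d : ℝ) :=
    Real.sqrt_pos.mpr (by nlinarith [show (5 : ℝ) ≤ m by exact_mod_cast hm])
  have hp' : 0 < p := by
    have : (0 : ℝ) < p := by linarith
    exact_mod_cast this
  have hq' : 0 < q := by
    have : (0 : ℝ) < q := pos_of_mul_pos_left (by linarith : (0 : ℝ) < q * √(d : ℝ)) hs0.le
    exact_mod_cast this
  have hpq : p ^ 2 - (m ^ 2 - 4) * q ^ 2 = 4 ∨ p ^ 2 - (m ^ 2 - 4) * q ^ 2 = -4 := by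
    have key : ((p ^ 2 - (m ^ 2 - 4) * q ^ 2 : ℤ) : ℝ) =
        4 * ((p + q * √(d : ℝ)) / 2 * ((p - q * √(d : ℝ)) / 2)) := by
      push_cast
      rw [← hs]
      ring
    rcases hnorm with h | h
    · left
      exact_mod_cast (by rw [key, h]; norm_num : ((p ^ 2 - (m ^ 2 - 4) * q ^ 2 : ℤ) : ℝ) = 4)
    · right
      exact_mod_cast (by rw [key, h]; norm_num : ((p ^ 2 - (m ^ 2 - 4) * q ^ 2 : ℤ) : ℝ) = -4)
  linarith [add_le_add_mul_of_sq_sub_mul_sq hm hs0.le hs hp' hq' hpq]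

theorem exists_unit_eq_half_sub_sqrt {m : ℤ} (hdm : (d : ℤ) = m ^ 2 - 4) :
    ∃ u : (𝓞 F)ˣ, (((u : 𝓞 F) : F) : ℝ) = (m - √(d : ℝ)) / 2 ∧
      ((((u⁻¹ : (𝓞 F)ˣ) : 𝓞 F) : F) : ℝ) = (m + √(d : ℝ)) / 2 := by
  have hdR : (d : ℝ) = (m : ℝ) ^ 2 - 4 := by exact_mod_cast hdm
  have hs : algebraMap F ℝ (AdjoinSimple.gen ℚ (√(d : ℝ))) = √(d : ℝ) :=
    AdjoinSimple.algebraMap_gen ℚ _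
  obtain ⟨u, hu, hu_inv⟩ := RingOfIntegers.exists_unit_of_sq_sub_mul_add_one_eq_zero
    (x := ((m : F) - AdjoinSimple.gen ℚ (√(d : ℝ))) / 2) m (by
      apply (algebraMap F ℝ).injective
      simp only [map_add, map_sub, map_mul, map_pow, map_div₀, map_ofNat, map_intCast, map_one,
        map_zero, hs]
      linear_combination (1 / 4 : ℝ) * sqrt_mul_self (d := d) + (1 / 4 : ℝ) * hdR)
  refine ⟨u, ?_, ?_⟩
  · change algebraMap F ℝ _ = _
    simp only [hu, map_sub, map_div₀, map_ofNat, map_intCast, hs]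
  · change algebraMap F ℝ _ = _
    simp only [hu_inv, map_sub, map_div₀, map_ofNat, map_intCast, hs]
    ring

theorem exists_fundamental_unit {m : ℤ} (hm : 5 ≤ m) (hdm : (d : ℤ) = m ^ 2 - 4)
    (hsf : Squarefree d) :
    ∃ u : (𝓞 F)ˣ, (((u : 𝓞 F) : F) : ℝ) = (m - √(d : ℝ)) / 2 ∧
      ∀ v : (𝓞 F)ˣ, ∃ k : ℤ, v = u ^ k ∨ v = -u ^ k := by
  have hd : ¬IsSquare d := by
    rintro ⟨r, rfl⟩
    obtain rfl : r = 1 := Nat.isUnit_iff.mp (hsf r dvd_rfl)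
    push_cast at hdm
    nlinarith
  obtain ⟨u, hu, hu_inv⟩ := exists_unit_eq_half_sub_sqrt hdm
  refine ⟨u, hu, fun v => ?_⟩
  obtain ⟨k, hk⟩ := Units.exists_zpow_or_neg_zpow_of_forall_le
    ((algebraMap F ℝ).comp (algebraMap (𝓞 F) F))
    ((algebraMap F ℝ).injective.comp RingOfIntegers.coe_injective) (e := u⁻¹)
    (show 1 < ((((u⁻¹ : (𝓞 F)ˣ) : 𝓞 F) : F) : ℝ) by
      rw [hu_inv]
      nlinarith [Real.sqrt_nonneg (d : ℝ), show (5 : ℝ) ≤ m by exact_mod_cast hm])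
    (fun w hw => show ((((u⁻¹ : (𝓞 F)ˣ) : 𝓞 F) : F) : ℝ) ≤ _ from
      hu_inv ▸ half_add_sqrt_le_of_one_lt hm hdm hd hsf w hw) v
  exact ⟨-k, by rwa [zpow_neg, ← inv_zpow]⟩

end RealQuadratic

/-- For odd `n > 5` with `n(n−4)` squarefree, `u = (n − 2 − √(n(n−4)))/2` is a
fundamental unit of the real quadratic field `ℚ(√(n(n−4)))`. -/
theorem stmt4 (n : ℕ) (hn : 5 < n) (hodd : Odd n)
    (hsf : Squarefree (n * (n - 4)))
    (K : IntermediateField ℚ ℝ)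
    (hK : K = IntermediateField.adjoin ℚ {Real.sqrt ((n * (n - 4) : ℕ) : ℝ)}) :
    ∃ u : (𝓞 K)ˣ,
      (((u : 𝓞 K) : K) : ℝ) = ((n : ℝ) - 2 - Real.sqrt ((n * (n - 4) : ℕ) : ℝ)) / 2 ∧
      ∀ v : (𝓞 K)ˣ, ∃ m : ℤ, v = u ^ m ∨ v = -u ^ m := by
  subst hK
  obtain ⟨u, hu, hfund⟩ := RealQuadratic.exists_fundamental_unit (m := (n : ℤ) - 2)
    (by obtain ⟨k, rfl⟩ := hodd; omega) (by push_cast [Nat.cast_sub (by omega : 4 ≤ n)]; ring) hsf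
  exact ⟨u, by rw [hu]; push_cast; ring, hfund⟩
end

section
/- Let χ₅ be the quadratic Dirichlet character modulo 5 (the Legendre symbol: χ₅(n) = 1 if n ≡ ±1 mod 5, χ₅(n) = −1 if n ≡ ±2 mod 5, and χ₅(n) = 0 if 5 ∣ n). Then ∑_{n=1}^{∞} χ₅(n)/n = (2/√5) · log((1 + √5)/2). -/
/-!
Writing `1/(n+1) = ∫₀¹ xⁿ dx`, the partial sum over the first `5M` terms of `χ₅(n+1)/(n+1)` is
`∫₀¹ (1 - x^{5M}) g`, where `g(x) = ∑ χ₅(n+1) xⁿ = (1 - x²)/(1 + x + x² + x³ + x⁴)`. The error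
`∫₀¹ x^{5M} g` tends to `0` by dominated convergence, and `∫₀¹ g = (2/√5) log φ` because
`1 + x + x² + x³ + x⁴ = (x² + φx + 1)(x² + ψx + 1)` makes `g` the derivative of
`(log (x² + φx + 1) - log (x² + ψx + 1))/√5`. Since the terms tend to `0`, convergence along the
multiples of `5` gives convergence of all partial sums.
-/

open Real Filter Finset Topology intervalIntegral MeasureTheory
open scoped goldenRatio

lemma tendsto_sum_range_of_tendsto_sum_range_mul {E : Type*} [NormedAddCommGroup E]
    {f : ℕ → E} {q : ℕ} {L : E} (hq : q ≠ 0) (hf : Tendsto f atTop (𝓝 0))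
    (hblocks : Tendsto (fun M => ∑ n ∈ range (q * M), f n) atTop (𝓝 L)) :
    Tendsto (fun N => ∑ n ∈ range N, f n) atTop (𝓝 L) := by
  have hdiv : Tendsto (· / q) atTop atTop := Nat.tendsto_div_const_atTop hq
  have hsplit (N : ℕ) : ∑ n ∈ range N, f n =
      ∑ n ∈ range (q * (N / q)), f n + ∑ i ∈ range (N % q), f (q * (N / q) + i) := by
    conv_lhs => rw [← Nat.div_add_mod N q]
    exact sum_range_add f _ _
  have hbound (N : ℕ) : ‖∑ i ∈ range (N % q), f (q * (N / q) + i)‖ ≤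
      ∑ i ∈ range q, ‖f (q * (N / q) + i)‖ :=
    (norm_sum_le _ _).trans <| sum_le_sum_of_subset_of_nonneg
      (range_mono (Nat.mod_lt N (Nat.pos_of_ne_zero hq)).le) fun _ _ _ => norm_nonneg _
  have htail : Tendsto (fun N => ∑ i ∈ range q, ‖f (q * (N / q) + i)‖) atTop (𝓝 0) := by
    simpa using tendsto_finsetSum (range q) fun i _ => (hf.comp <| tendsto_atTop_mono
      (fun N => (Nat.le_mul_of_pos_left _ (Nat.pos_of_ne_zero hq)).trans (Nat.le_add_right _ i))
      hdiv).norm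
  have hlim := (hblocks.comp hdiv).add (squeeze_zero_norm hbound htail)
  rw [add_zero] at hlim
  exact hlim.congr fun N => (hsplit N).symm

lemma sum_range_mul_mul_pow_of_periodic {R : Type*} [CommSemiring R] {a : ℕ → R} {q : ℕ}
    (ha : Function.Periodic a q) (M : ℕ) (x : R) :
    ∑ n ∈ range (q * M), a n * x ^ n =
      (∑ k ∈ range M, (x ^ q) ^ k) * ∑ j ∈ range q, a j * x ^ j := by
  induction M with
  | zero => simp
  | succ M ih =>
    rw [Nat.mul_succ, sum_range_add (fun n => a n * x ^ n), ih, sum_range_succ, add_mul]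
    congr 1
    rw [mul_sum]
    refine sum_congr rfl fun j _ => ?_
    have hperiod : a (j + q * M) = a j := by simpa [mul_comm] using ha.nat_mul M j
    rw [add_comm (q * M), hperiod, pow_add, pow_mul]
    ring

lemma sum_div_succ_eq_integral (a : ℕ → ℝ) (N : ℕ) :
    ∑ n ∈ range N, a n / (n + 1) = ∫ x in (0 : ℝ)..1, ∑ n ∈ range N, a n * x ^ n := by
  rw [integral_finsetSum fun n _ => (by fun_prop : Continuous _).intervalIntegrable 0 1]
  refine sum_congr rfl fun n _ => ?_
  simp [integral_pow, div_eq_mul_inv]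

lemma tendsto_integral_pow_mul_zero {g : ℝ → ℝ} (hg : IntervalIntegrable g volume 0 1) :
    Tendsto (fun n : ℕ => ∫ x in (0 : ℝ)..1, x ^ n * g x) atTop (𝓝 0) := by
  have hlim := tendsto_integral_filter_of_dominated_convergence (F := fun n x => x ^ n * g x)
    (f := fun _ => 0) (fun x => ‖g x‖)
    (Eventually.of_forall fun n => ((continuous_pow n).aestronglyMeasurable.mul
      hg.def'.aestronglyMeasurable))
    (Eventually.of_forall fun n => Eventually.of_forall fun x hx => by
      rw [Set.uIoc_of_le zero_le_one] at hx
      rw [norm_mul, norm_pow]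
      exact mul_le_of_le_one_left (norm_nonneg _)
        (pow_le_one₀ (norm_nonneg _) (by rw [Real.norm_of_nonneg hx.1.le]; exact hx.2)))
    hg.norm
    (by
      filter_upwards [volume.ae_ne 1] with x hx1 hx
      rw [Set.uIoc_of_le zero_le_one] at hx
      simpa using (tendsto_pow_atTop_nhds_zero_of_lt_one hx.1.le
        (lt_of_le_of_ne hx.2 hx1)).mul_const (g x))
  simpa using hlim

lemma sq_add_mul_add_one_pos {c : ℝ} (hc : c ^ 2 < 4) (x : ℝ) : 0 < x ^ 2 + c * x + 1 := by
  nlinarith [sq_nonneg (2 * x + c)]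

lemma hasDerivAt_log_quadratic {c : ℝ} (hc : c ^ 2 < 4) (x : ℝ) :
    HasDerivAt (fun x => log (x ^ 2 + c * x + 1)) ((2 * x + c) / (x ^ 2 + c * x + 1)) x := by
  have hquad : HasDerivAt (fun x => x ^ 2 + c * x + 1) (2 * x + c) x := by
    simpa using ((hasDerivAt_pow 2 x).add ((hasDerivAt_id x).const_mul c)).add_const 1
  exact hquad.log (sq_add_mul_add_one_pos hc x).ne'

lemma hasDerivAt_log_quadratic_sub_log_quadratic {c d : ℝ} (hc : c ^ 2 < 4) (hd : d ^ 2 < 4)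
    (x : ℝ) :
    HasDerivAt (fun x => log (x ^ 2 + c * x + 1) - log (x ^ 2 + d * x + 1))
      ((c - d) * (1 - x ^ 2) / ((x ^ 2 + c * x + 1) * (x ^ 2 + d * x + 1))) x := by
  refine ((hasDerivAt_log_quadratic hc x).sub (hasDerivAt_log_quadratic hd x)).congr_deriv ?_
  rw [div_sub_div _ _ (sq_add_mul_add_one_pos hc x).ne' (sq_add_mul_add_one_pos hd x).ne']
  ring

lemma goldenRatio_sq_lt_four : φ ^ 2 < 4 := by
  nlinarith [goldenRatio_pos, goldenRatio_lt_two]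

lemma goldenConj_sq_lt_four : ψ ^ 2 < 4 := by
  nlinarith [goldenConj_neg, neg_one_lt_goldenConj]

lemma cyclotomic_five_eq_mul (x : ℝ) :
    x ^ 4 + x ^ 3 + x ^ 2 + x + 1 = (x ^ 2 + φ * x + 1) * (x ^ 2 + ψ * x + 1) := by
  linear_combination (-(x ^ 3 + x)) * goldenRatio_add_goldenConj -
    x ^ 2 * goldenRatio_mul_goldenConj

lemma cyclotomic_five_pos (x : ℝ) : 0 < x ^ 4 + x ^ 3 + x ^ 2 + x + 1 := by
  rw [cyclotomic_five_eq_mul]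
  exact mul_pos (sq_add_mul_add_one_pos goldenRatio_sq_lt_four x)
    (sq_add_mul_add_one_pos goldenConj_sq_lt_four x)

noncomputable def chi5 (n : ℕ) : ℝ :=
  if n % 5 = 0 then 0 else if n % 5 = 1 ∨ n % 5 = 4 then 1 else -1

/-- `∑ₙ χ₅(n+1) xⁿ = (1 - x - x² + x³)/(1 - x⁵)`, with the common factor `1 - x` cancelled. -/
noncomputable def chi5GF (x : ℝ) : ℝ := (1 - x ^ 2) / (x ^ 4 + x ^ 3 + x ^ 2 + x + 1)

lemma continuous_chi5GF : Continuous chi5GF :=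
  Continuous.div (by fun_prop) (by fun_prop) fun x => (cyclotomic_five_pos x).ne'

lemma hasDerivAt_chi5GF_primitive (x : ℝ) :
    HasDerivAt (fun x => (log (x ^ 2 + φ * x + 1) - log (x ^ 2 + ψ * x + 1)) / √5)
      (chi5GF x) x := by
  refine ((hasDerivAt_log_quadratic_sub_log_quadratic goldenRatio_sq_lt_four
    goldenConj_sq_lt_four x).div_const √5).congr_deriv ?_
  rw [chi5GF, cyclotomic_five_eq_mul, goldenRatio_sub_goldenConj, mul_div_assoc,
    mul_div_cancel_left₀ _ (by positivity)]

lemma integral_chi5GF : ∫ x in (0 : ℝ)..1, chi5GF x = 2 / √5 * log φ := by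
  rw [integral_eq_sub_of_hasDerivAt (fun x _ => hasDerivAt_chi5GF_primitive x)
    (continuous_chi5GF.intervalIntegrable 0 1)]
  have h : (1 : ℝ) ^ 2 + φ * 1 + 1 = φ ^ 2 * (1 ^ 2 + ψ * 1 + 1) := by
    linear_combination (-2) * goldenRatio_sq - φ * goldenRatio_mul_goldenConj
  rw [h, log_mul (by positivity) (sq_add_mul_add_one_pos goldenConj_sq_lt_four 1).ne', log_pow]
  norm_num
  ring

lemma periodic_chi5_succ : Function.Periodic (fun n => chi5 (n + 1)) 5 := fun n => by
  simp only [chi5, Nat.add_right_comm n 5 1, Nat.add_mod_right]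

lemma sum_range_five_mul_chi5_succ_mul_pow (M : ℕ) (x : ℝ) :
    ∑ n ∈ range (5 * M), chi5 (n + 1) * x ^ n = (1 - x ^ (5 * M)) * chi5GF x := by
  have hperiod : ∑ j ∈ range 5, chi5 (j + 1) * x ^ j = (1 - x) * (1 - x ^ 2) := by
    simp only [sum_range_succ, sum_range_zero, chi5, Nat.reduceAdd, Nat.reduceMod]
    norm_num
    ring
  rw [sum_range_mul_mul_pow_of_periodic periodic_chi5_succ, hperiod, chi5GF, pow_mul,
    mul_div_assoc', eq_div_iff (cyclotomic_five_pos x).ne']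
  linear_combination (1 - x ^ 2) * mul_neg_geom_sum (x ^ 5) M

lemma sum_range_five_mul_chi5_succ_div (M : ℕ) :
    ∑ n ∈ range (5 * M), chi5 (n + 1) / (n + 1) =
      2 / √5 * log φ - ∫ x in (0 : ℝ)..1, x ^ (5 * M) * chi5GF x := by
  rw [sum_div_succ_eq_integral, ← integral_chi5GF,
    ← integral_sub (g := fun x => x ^ (5 * M) * chi5GF x)
      (continuous_chi5GF.intervalIntegrable 0 1)
      (((continuous_pow _).mul continuous_chi5GF).intervalIntegrable 0 1)]
  simp_rw [sum_range_five_mul_chi5_succ_mul_pow, sub_mul, one_mul]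

lemma tendsto_chi5_succ_div_zero : Tendsto (fun n : ℕ => chi5 (n + 1) / (n + 1)) atTop (𝓝 0) := by
  refine squeeze_zero_norm (fun n => ?_) tendsto_one_div_add_atTop_nhds_zero_nat
  rw [norm_div, Real.norm_of_nonneg (by positivity : (0 : ℝ) ≤ n + 1)]
  gcongr
  rw [chi5]
  split_ifs <;> simp

/-- `∑_{n=1}^{∞} χ₅(n)/n = (2/√5)·log((1+√5)/2)` for the quadratic character mod 5. -/
theorem stmt5 (χ : ℕ → ℝ)
    (hχ : ∀ n : ℕ, χ n =
      if n % 5 = 0 then 0 else if n % 5 = 1 ∨ n % 5 = 4 then 1 else -1) :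
    Filter.Tendsto (fun N : ℕ => ∑ n ∈ Finset.range N, χ n / n) Filter.atTop
      (nhds ((2 / Real.sqrt 5) * Real.log ((1 + Real.sqrt 5) / 2))) := by
  obtain rfl : χ = chi5 := funext hχ
  have hblocks : Tendsto (fun M => ∑ n ∈ range (5 * M), chi5 (n + 1) / (n + 1)) atTop
      (𝓝 (2 / √5 * log φ)) := by
    simp_rw [sum_range_five_mul_chi5_succ_div]
    simpa using tendsto_const_nhds.sub ((tendsto_integral_pow_mul_zero
      (continuous_chi5GF.intervalIntegrable 0 1)).comp (tendsto_id.const_mul_atTop' (by norm_num)))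
  rw [← tendsto_add_atTop_iff_nat 1]
  refine (tendsto_sum_range_of_tendsto_sum_range_mul (by norm_num) tendsto_chi5_succ_div_zero
    hblocks).congr fun N => ?_
  -- the extra `n = 0` term is `χ₅ 0 / 0 = 0`
  simp [sum_range_succ']
end

section
/- Let K₁ := ℚ[Y]/(Y⁵ − Y + 1), the number field defined by the irreducible polynomial Y⁵ − Y + 1 over ℚ. Then the class number of K₁ equals 1. -/
/-!
Let `α` be a root of `f = X⁵ - X + 1`. Since `α f'(α) = 4α - 5 = -4 (5/4 - α)` and `N(α) = -1`,
`N(f'(α)) = 4⁵ f(5/4) = 2869`, which is the discriminant of `ℤ[α]`. The discriminant of `K`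
divides it, so the Minkowski bound of `K` is below `4`. An ideal of norm `p ∈ {2, 3}` would give a
ring map `𝓞 K → 𝔽_p`, hence a root of `f` modulo `p`, and there is none. So every ideal class
contains an ideal of norm `1`, i.e. the unit ideal.
-/

open Polynomial NumberField Module InfinitePlace Real Nat

theorem PowerBasis.norm_algebraMap_sub_gen {R S : Type*} [CommRing R] [CommRing S] [Algebra R S]
    (pb : PowerBasis R S) (c : R) :
    Algebra.norm R (algebraMap R S c - pb.gen) = (minpoly R pb.gen).eval c := by
  rw [Algebra.norm_eq_matrix_det pb.basis, ← charpoly_leftMulMatrix, Matrix.eval_charpoly,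
    map_sub, AlgHom.commutes, Matrix.algebraMap_eq_diagonal]
  rfl

theorem Ideal.absNorm_ne_of_aeval_eq_zero {S : Type*} [CommRing S] [IsDedekindDomain S]
    [Module.Free ℤ S] [Module.Finite ℤ S] {f : ℤ[X]} {a : S} (ha : aeval a f = 0)
    {p : ℕ} (hp : p.Prime) (hf : ∀ x : ZMod p, aeval x f ≠ 0) (I : Ideal S) :
    Ideal.absNorm I ≠ p := by
  intro hI
  have hcard : Nat.card (S ⧸ I) = p := by
    rwa [Ideal.absNorm_apply, Submodule.cardQuot_apply] at hI
  have : Finite (S ⧸ I) := Nat.finite_of_card_ne_zero (hcard ▸ hp.ne_zero)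
  have := Fintype.ofFinite (S ⧸ I)
  let ψ : S →+* ZMod p := ((ZMod.ringEquivOfPrime (S ⧸ I) hp
    (by rwa [← Nat.card_eq_fintype_card])).symm : S ⧸ I →+* ZMod p).comp (Ideal.Quotient.mk I)
  exact hf (ψ a) (by rw [← ψ.toIntAlgHom_apply, aeval_algHom_apply, ha, map_zero])

namespace NumberField

variable {K : Type*} [Field K] [NumberField K]

theorem exists_sq_mul_discr_eq {ι : Type*} [Fintype ι] [DecidableEq ι]
    (b : Basis ι ℚ K) (hb : ∀ i, IsIntegral ℤ (b i)) :
    ∃ r : ℤ, Algebra.discr ℚ b = r ^ 2 * discr K := by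
  let B := (integralBasis K).reindex ((integralBasis K).indexEquiv b)
  have hint : IsIntegral ℤ (B.toMatrix b).det := by
    refine IsIntegral.det fun i j ↦ ?_
    obtain ⟨x, hx⟩ : ∃ x : 𝓞 K, algebraMap (𝓞 K) K x = b j := ⟨⟨b j, hb j⟩, rfl⟩
    rw [Basis.toMatrix_apply, Basis.repr_reindex_apply, ← hx, integralBasis_repr_apply]
    exact isIntegral_algebraMap
  obtain ⟨r, hr⟩ := IsIntegrallyClosed.isIntegral_iff.mp hint
  refine ⟨r, ?_⟩
  rw [← B.toMatrix_map_vecMul b, Algebra.discr_of_matrix_vecMul, ← hr, Basis.coe_reindex,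
    Algebra.discr_reindex, coe_discr]
  simp

theorem abs_discr_le_of_basis {ι : Type*} [Fintype ι] [DecidableEq ι]
    (b : Basis ι ℚ K) (hb : ∀ i, IsIntegral ℤ (b i)) {d : ℤ} (hd : Algebra.discr ℚ b = d)
    (hd0 : d ≠ 0) : |discr K| ≤ |d| := by
  obtain ⟨r, hr⟩ := exists_sq_mul_discr_eq b hb
  have : d = r ^ 2 * discr K := by exact_mod_cast hd.symm.trans hr
  exact Int.le_of_dvd (abs_pos.mpr hd0) ((abs_dvd_abs _ _).mpr (Dvd.intro_left _ this.symm))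

theorem finrank_eq_five_of_minpoly_gen (pb : PowerBasis ℚ K)
    (hpb : minpoly ℚ pb.gen = X ^ 5 - X + 1) : finrank ℚ K = 5 := by
  rw [pb.finrank, ← pb.natDegree_minpoly, hpb]
  compute_degree!

theorem gen_pow_five_sub_gen_add_one (pb : PowerBasis ℚ K)
    (hpb : minpoly ℚ pb.gen = X ^ 5 - X + 1) : pb.gen ^ 5 - pb.gen + 1 = 0 := by
  simpa [hpb] using minpoly.aeval ℚ pb.gen

theorem discr_basis_eq_of_minpoly_gen (pb : PowerBasis ℚ K)
    (hpb : minpoly ℚ pb.gen = X ^ 5 - X + 1) : Algebra.discr ℚ pb.basis = 2869 := by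
  have hK := finrank_eq_five_of_minpoly_gen pb hpb
  have hdim : pb.dim = 5 := by rw [← pb.finrank, hK]
  have hα := gen_pow_five_sub_gen_add_one pb hpb
  set α := pb.gen
  have hnorm_gen : Algebra.norm ℚ α = -1 := by
    rw [Algebra.PowerBasis.norm_gen_eq_coeff_zero_minpoly, hpb, hdim]
    norm_num
  have hprod : α * (5 * α ^ 4 - 1) = algebraMap ℚ K (-4) * (algebraMap ℚ K (5 / 4) - α) := by
    simp only [map_neg, map_ofNat, map_div₀]
    linear_combination 5 * hα
  have hnorm := congrArg (Algebra.norm ℚ) hprod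
  rw [map_mul, map_mul, hnorm_gen, Algebra.norm_algebraMap, hK, pb.norm_algebraMap_sub_gen,
    hpb] at hnorm
  have hderiv : aeval α (derivative (X ^ 5 - X + 1 : ℚ[X])) = 5 * α ^ 4 - 1 := by
    norm_num
  rw [Algebra.discr_powerBasis_eq_norm, hK, hpb, hderiv]
  norm_num at hnorm ⊢
  linarith

theorem minkowski_bound_lt_four (hK : finrank ℚ K = 5) (hd : |discr K| ≤ 2869) :
    (4 / π) ^ nrComplexPlaces K * ((finrank ℚ K)! / (finrank ℚ K) ^ (finrank ℚ K) * √|discr K|)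
      < 4 := by
  have hs : nrComplexPlaces K ≤ 2 := by
    have := card_add_two_mul_card_eq_rank K
    omega
  have hpow : (4 / π) ^ nrComplexPlaces K ≤ (4 / π) ^ 2 :=
    pow_le_pow_right₀ ((one_le_div pi_pos).mpr pi_le_four) hs
  have hsqrt : √|(discr K : ℝ)| ≤ 54 := by
    rw [sqrt_le_left (by norm_num)]
    have : |(discr K : ℝ)| ≤ 2869 := by exact_mod_cast hd
    linarith
  rw [hK]
  calc (4 / π) ^ nrComplexPlaces K * ((5 : ℕ)! / ((5 : ℕ) : ℝ) ^ 5 * √|(discr K : ℝ)|)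
      ≤ (4 / π) ^ 2 * (120 / 3125 * 54) := by
        gcongr
        · norm_num [Nat.factorial]
        · norm_num
    _ < 4 := by
        rw [div_pow, div_mul_eq_mul_div, div_lt_iff₀ (by positivity)]
        nlinarith [pi_gt_three]

theorem exists_root_eq_gen_of_minpoly_gen (pb : PowerBasis ℚ K)
    (hpb : minpoly ℚ pb.gen = X ^ 5 - X + 1) :
    ∃ a : 𝓞 K, algebraMap (𝓞 K) K a = pb.gen ∧ aeval a (X ^ 5 - X + 1 : ℤ[X]) = 0 := by
  have hα := gen_pow_five_sub_gen_add_one pb hpb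
  have hint : IsIntegral ℤ pb.gen := ⟨X ^ 5 - X + 1, by monicity!, by simp [hα]⟩
  let a : 𝓞 K := ⟨pb.gen, hint⟩
  refine ⟨a, rfl, ?_⟩
  apply FaithfulSMul.algebraMap_injective (𝓞 K) K
  rw [← aeval_algebraMap_apply, map_zero]
  simp only [map_add, map_sub, map_pow, aeval_X, map_one]
  exact hα

theorem abs_discr_le_of_minpoly_gen (pb : PowerBasis ℚ K)
    (hpb : minpoly ℚ pb.gen = X ^ 5 - X + 1) : |discr K| ≤ 2869 := by
  obtain ⟨a, hga, -⟩ := exists_root_eq_gen_of_minpoly_gen pb hpb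
  refine abs_discr_le_of_basis pb.basis (fun i ↦ ?_) (discr_basis_eq_of_minpoly_gen pb hpb)
    (by norm_num)
  rw [pb.coe_basis, ← hga]
  exact (RingOfIntegers.isIntegral_coe a).pow _

theorem classNumber_eq_one_of_minpoly_gen (pb : PowerBasis ℚ K)
    (hpb : minpoly ℚ pb.gen = X ^ 5 - X + 1) : classNumber K = 1 := by
  obtain ⟨a, -, ha⟩ := exists_root_eq_gen_of_minpoly_gen pb hpb
  have hM := minkowski_bound_lt_four (finrank_eq_five_of_minpoly_gen pb hpb)
    (abs_discr_le_of_minpoly_gen pb hpb)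
  rw [classNumber_eq_one_iff]
  refine RingOfIntegers.isPrincipalIdealRing_of_isPrincipal_of_norm_le fun I hI ↦ ?_
  have hlt : Ideal.absNorm (I : Ideal (𝓞 K)) < 4 := by exact_mod_cast hI.trans_lt hM
  have hne0 := Ideal.absNorm_ne_zero_of_nonZeroDivisors I
  have heval (p : ℕ) (x : ZMod p) : aeval x (X ^ 5 - X + 1 : ℤ[X]) = x ^ 5 - x + 1 := by simp
  have hne2 := Ideal.absNorm_ne_of_aeval_eq_zero ha prime_two (by simp only [heval]; decide) I
  have hne3 := Ideal.absNorm_ne_of_aeval_eq_zero ha prime_three (by simp only [heval]; decide) I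
  have hone : Ideal.absNorm (I : Ideal (𝓞 K)) = 1 := by omega
  rw [Ideal.absNorm_eq_one_iff.mp hone]
  exact top_isPrincipal

end NumberField

/-- The number field `K₁ = ℚ[Y]/(Y⁵ − Y + 1)` has class number 1. -/
theorem stmt6 (K : Type*) [Field K] [NumberField K]
    (e : K ≃ₐ[ℚ] AdjoinRoot (X ^ 5 - X + 1 : ℚ[X])) :
    NumberField.classNumber K = 1 := by
  have hf : (X ^ 5 - X + 1 : ℚ[X]).Monic := by monicity!
  let pb : PowerBasis ℚ K := (AdjoinRoot.powerBasis hf.ne_zero).map e.symm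
  refine classNumber_eq_one_of_minpoly_gen pb ?_
  rw [PowerBasis.map_gen, minpoly.algEquiv_eq, AdjoinRoot.powerBasis_gen,
    AdjoinRoot.minpoly_root hf.ne_zero, hf.leadingCoeff, inv_one, C_1, mul_one]
end

section
/- Let φ(x,y) := (x−1)²(y−1)²/(xy). For every real t with 0 < t ≤ 1/16, the series ∑_{m≥1} binom(2m,m)²·t^m/m converges, the function (θ,η) ↦ log|t⁻¹ − φ(e^{iθ}, e^{iη})| is integrable on [0,2π]², and (1/(2π)²) · ∫₀^{2π} ∫₀^{2π} log|t⁻¹ − φ(e^{iθ}, e^{iη})| dθ dη = −log t − ∑_{m≥1} binom(2m,m)²·t^m/m. -/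
open MeasureTheory

/-- `φ(x,y) = (x−1)²(y−1)²/(xy)`. -/
noncomputable def phiE (x y : ℂ) : ℂ := (x - 1) ^ 2 * (y - 1) ^ 2 / (x * y)

/-!
On the torus `φ(e^{iθ}, e^{iη}) = c(θ) c(η)` with `c(θ) = |e^{iθ} - 1|² = 2 - 2 cos θ ∈ [0, 4]`, so the
integrand equals `-log t + log (1 - u)` with `u = t c(θ) c(η) ∈ [0, 1]`, and `u < 1` off a null
set. Expand `-log (1 - u) = ∑ uᵐ / m` and integrate termwise, which is legitimate because every
term is nonnegative: since `c(θ) = 4 sin² (θ / 2)`, Wallis' integral gives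
`∫₀^{2π} c(θ)ᵐ dθ = 2π binom(2m, m)`, so the `m`-th term contributes `(2π)² binom(2m, m)² tᵐ / m`.
These terms are summable for `t ≤ 1/16` because `binom(2m, m)² (3m + 1) ≤ 16ᵐ`.
-/

open Filter Real Set

section TermwiseIntegration

variable {α E ι : Type*} [MeasurableSpace α] {μ : Measure α} [NormedAddCommGroup E]
  [Countable ι] {F : ι → α → E} {g : α → E}

theorem integrable_of_hasSum_of_summable_integral_norm (hg : AEStronglyMeasurable g μ)
    (hF : ∀ᵐ a ∂μ, HasSum (F · a) (g a)) (hF_int : ∀ i, Integrable (F i) μ)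
    (hF_sum : Summable fun i ↦ ∫ a, ‖F i a‖ ∂μ) : Integrable g μ := by
  refine ⟨hg, ?_⟩
  rw [hasFiniteIntegral_iff_enorm]
  calc ∫⁻ a, ‖g a‖ₑ ∂μ ≤ ∫⁻ a, ∑' i, ‖F i a‖ₑ ∂μ := by
        refine lintegral_mono_ae ?_
        filter_upwards [hF] with a ha
        rw [← ha.tsum_eq]
        exact enorm_tsum_le_tsum_enorm
    _ = ∑' i, ∫⁻ a, ‖F i a‖ₑ ∂μ := lintegral_tsum fun i ↦ (hF_int i).1.enorm
    _ = ENNReal.ofReal (∑' i, ∫ a, ‖F i a‖ ∂μ) := by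
        rw [ENNReal.ofReal_tsum_of_nonneg (fun i ↦ integral_nonneg fun a ↦ norm_nonneg _) hF_sum]
        simp_rw [ofReal_integral_norm_eq_lintegral_enorm (hF_int _)]
    _ < ⊤ := ENNReal.ofReal_lt_top

theorem hasSum_integral_of_hasSum_of_summable_integral_norm [NormedSpace ℝ E]
    (hF : ∀ᵐ a ∂μ, HasSum (F · a) (g a)) (hF_int : ∀ i, Integrable (F i) μ)
    (hF_sum : Summable fun i ↦ ∫ a, ‖F i a‖ ∂μ) :
    HasSum (fun i ↦ ∫ a, F i a ∂μ) (∫ a, g a ∂μ) := by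
  rw [integral_congr_ae (hF.mono fun a ha ↦ ha.tsum_eq.symm)]
  exact hasSum_integral_of_summable_integral_norm hF_int hF_sum

end TermwiseIntegration

theorem integrable_neg_log_one_sub_and_hasSum_integral {α : Type*} [MeasurableSpace α]
    {μ : Measure α} {f : α → ℝ} (hf : AEMeasurable f μ) (hf0 : ∀ᵐ a ∂μ, 0 ≤ f a)
    (hf1 : ∀ᵐ a ∂μ, f a < 1) (hf_int : ∀ n : ℕ, Integrable (fun a ↦ f a ^ (n + 1)) μ)
    (hsum : Summable fun n : ℕ ↦ ∫ a, f a ^ (n + 1) / (n + 1) ∂μ) :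
    Integrable (fun a ↦ -log (1 - f a)) μ ∧
      HasSum (fun n : ℕ ↦ ∫ a, f a ^ (n + 1) / (n + 1) ∂μ) (∫ a, -log (1 - f a) ∂μ) := by
  have hF : ∀ᵐ a ∂μ, HasSum (fun n : ℕ ↦ f a ^ (n + 1) / (n + 1)) (-log (1 - f a)) := by
    filter_upwards [hf0, hf1] with a h0 h1
    exact hasSum_pow_div_log_of_abs_lt_one (by rwa [abs_of_nonneg h0])
  have hF_int (n : ℕ) : Integrable (fun a ↦ f a ^ (n + 1) / (n + 1)) μ := (hf_int n).div_const _
  have hF_sum : Summable fun n : ℕ ↦ ∫ a, ‖f a ^ (n + 1) / (n + 1)‖ ∂μ := by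
    refine hsum.congr fun n ↦ integral_congr_ae ?_
    filter_upwards [hf0] with a h0
    exact (Real.norm_of_nonneg (by positivity)).symm
  exact ⟨integrable_of_hasSum_of_summable_integral_norm
      (hf.const_sub 1).log.neg.aestronglyMeasurable hF hF_int hF_sum,
    hasSum_integral_of_hasSum_of_summable_integral_norm hF hF_int hF_sum⟩

theorem prod_range_two_mul_add_one_div_eq_centralBinom_div (n : ℕ) :
    ∏ i ∈ Finset.range n, (2 * (i : ℝ) + 1) / (2 * i + 2) = n.centralBinom / 4 ^ n := by
  induction n with
  | zero => simp
  | succ k ih =>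
    have hrec : ((k : ℝ) + 1) * (k + 1).centralBinom = 2 * (2 * k + 1) * k.centralBinom := by
      exact_mod_cast Nat.succ_mul_centralBinom_succ k
    rw [Finset.prod_range_succ, ih]
    field_simp
    linear_combination (-2 : ℝ) * 4 ^ k * hrec

theorem centralBinom_sq_mul_le (n : ℕ) : n.centralBinom ^ 2 * (3 * n + 1) ≤ 16 ^ n := by
  induction n with
  | zero => simp
  | succ k ih =>
    have hrec := Nat.succ_mul_centralBinom_succ k
    have hk : (2 * k + 1) ^ 2 * (3 * k + 4) ≤ 4 * (k + 1) ^ 2 * (3 * k + 1) := by nlinarith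
    refine le_of_mul_le_mul_left (a := (k + 1) ^ 2) ?_ (by positivity)
    calc (k + 1) ^ 2 * ((k + 1).centralBinom ^ 2 * (3 * (k + 1) + 1))
        = 4 * ((2 * k + 1) ^ 2 * (3 * k + 4)) * k.centralBinom ^ 2 := by
          rw [← mul_assoc, ← mul_pow, hrec]; ring
      _ ≤ 4 * (4 * (k + 1) ^ 2 * (3 * k + 1)) * k.centralBinom ^ 2 := by gcongr
      _ = 16 * (k + 1) ^ 2 * (k.centralBinom ^ 2 * (3 * k + 1)) := by ring
      _ ≤ 16 * (k + 1) ^ 2 * 16 ^ k := by gcongr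
      _ = (k + 1) ^ 2 * 16 ^ (k + 1) := by ring

theorem summable_centralBinom_sq_mul_pow_div {t : ℝ} (ht0 : 0 ≤ t) (ht : t ≤ 1 / 16) :
    Summable fun m : ℕ ↦ ((m + 1).centralBinom : ℝ) ^ 2 * t ^ (m + 1) / (m + 1) := by
  refine Summable.of_nonneg_of_le (fun m ↦ by positivity) (fun m ↦ ?_)
    ((summable_nat_add_iff 1).mpr (Real.summable_one_div_nat_pow.mpr one_lt_two))
  have hbound : (((m + 1).centralBinom : ℝ) ^ 2 * (3 * ((m : ℝ) + 1) + 1)) ≤ 16 ^ (m + 1) := by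
    exact_mod_cast centralBinom_sq_mul_le (m + 1)
  have htn : t ^ (m + 1) ≤ 1 / 16 ^ (m + 1) := by rw [one_div, ← inv_pow]; gcongr; linarith
  push_cast
  rw [div_le_div_iff₀ (by positivity) (by positivity)]
  calc ((m + 1).centralBinom : ℝ) ^ 2 * t ^ (m + 1) * ((m : ℝ) + 1) ^ 2
      ≤ ((m + 1).centralBinom : ℝ) ^ 2 * (3 * ((m : ℝ) + 1) + 1) * (1 / 16 ^ (m + 1)) * (m + 1) := by
        rw [sq ((m : ℝ) + 1), mul_right_comm _ (3 * _ + 1), ← mul_assoc]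
        gcongr
        linarith
    _ ≤ 16 ^ (m + 1) * (1 / 16 ^ (m + 1)) * ((m : ℝ) + 1) := by gcongr
    _ = 1 * ((m : ℝ) + 1) := by field_simp

/-- `chordSq θ = |e^{iθ} - 1|²`. -/
noncomputable def chordSq (θ : ℝ) : ℝ := 2 - 2 * cos θ

theorem chordSq_nonneg (θ : ℝ) : 0 ≤ chordSq θ := by
  rw [chordSq]; linarith [cos_le_one θ]

theorem chordSq_le_four (θ : ℝ) : chordSq θ ≤ 4 := by
  rw [chordSq]; linarith [neg_one_le_cos θ]

@[fun_prop]
theorem continuous_chordSq : Continuous chordSq := by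
  unfold chordSq; fun_prop

theorem chordSq_eq_four_mul_sin_sq (θ : ℝ) : chordSq θ = 4 * sin (θ / 2) ^ 2 := by
  rw [chordSq, sin_sq_eq_half_sub, mul_div_cancel₀ _ two_ne_zero]; ring

theorem exp_mul_I_sub_one_sq (θ : ℝ) :
    (Complex.exp (θ * Complex.I) - 1) ^ 2 = -(chordSq θ : ℂ) * Complex.exp (θ * Complex.I) := by
  rw [Complex.exp_mul_I, chordSq]
  push_cast
  linear_combination (-1 : ℂ) * Complex.sin_sq_add_cos_sq (θ : ℂ) + Complex.sin θ ^ 2 * Complex.I_sq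

theorem phiE_exp_mul_I (θ η : ℝ) :
    phiE (Complex.exp (θ * Complex.I)) (Complex.exp (η * Complex.I)) = chordSq θ * chordSq η := by
  have hθ := Complex.exp_ne_zero (θ * Complex.I)
  have hη := Complex.exp_ne_zero (η * Complex.I)
  rw [phiE, exp_mul_I_sub_one_sq, exp_mul_I_sub_one_sq]
  field_simp

theorem ae_chordSq_lt_four : ∀ᵐ θ : ℝ, chordSq θ < 4 := by
  have hcount : {θ : ℝ | cos θ = -1}.Countable :=
    (Set.countable_range fun k : ℤ ↦ π + k * (2 * π)).mono fun θ hθ ↦ cos_eq_neg_one_iff.mp hθ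
  filter_upwards [hcount.ae_notMem volume] with θ hθ
  exact (chordSq_le_four θ).lt_of_ne fun h ↦ hθ (by simp only [chordSq] at h; linarith)

theorem integral_chordSq_pow (n : ℕ) :
    ∫ θ in (0 : ℝ)..2 * π, chordSq θ ^ n = 2 * π * n.centralBinom := by
  simp_rw [chordSq_eq_four_mul_sin_sq, mul_pow, ← pow_mul]
  rw [intervalIntegral.integral_const_mul,
    intervalIntegral.integral_comp_div (fun x ↦ sin x ^ (2 * n)) two_ne_zero, zero_div,
    mul_div_cancel_left₀ _ two_ne_zero, integral_sin_pow_even,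
    prod_range_two_mul_add_one_div_eq_centralBinom_div, smul_eq_mul]
  field_simp

theorem volume_restrict_Icc_prod_Icc (a b c d : ℝ) :
    volume.restrict (Icc a b ×ˢ Icc c d) =
      (volume.restrict (Ioc a b)).prod (volume.restrict (Ioc c d)) := by
  rw [Measure.prod_restrict, ← Measure.volume_eq_prod]
  exact Measure.restrict_congr_set (Measure.set_prod_ae_eq Ioc_ae_eq_Icc Ioc_ae_eq_Icc).symm

local notation "μ₀" => Measure.prod (volume.restrict (Ioc 0 (2 * π))) (volume.restrict (Ioc 0 (2 * π)))

theorem measureReal_univ_eq_two_pi_sq : (μ₀).real univ = (2 * π) ^ 2 := by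
  rw [measureReal_def, ← univ_prod_univ, Measure.prod_prod, Measure.restrict_apply_univ,
    Real.volume_Ioc, sub_zero, ENNReal.toReal_mul, ENNReal.toReal_ofReal two_pi_pos.le, sq]

theorem ae_chordSq_mul_chordSq_lt_sixteen : ∀ᵐ p ∂μ₀, chordSq p.1 * chordSq p.2 < 16 := by
  filter_upwards [Measure.quasiMeasurePreserving_fst.ae (ae_restrict_of_ae ae_chordSq_lt_four)]
    with p hp
  nlinarith [chordSq_nonneg p.1, chordSq_nonneg p.2, chordSq_le_four p.2]

theorem ae_mul_chordSq_mul_chordSq_lt_one {t : ℝ} (ht : t ≤ 1 / 16) :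
    ∀ᵐ p ∂μ₀, t * (chordSq p.1 * chordSq p.2) < 1 := by
  filter_upwards [ae_chordSq_mul_chordSq_lt_sixteen] with p hp
  nlinarith [mul_nonneg (chordSq_nonneg p.1) (chordSq_nonneg p.2)]

theorem integral_chordSq_mul_chordSq_pow (n : ℕ) :
    ∫ p, (chordSq p.1 * chordSq p.2) ^ n ∂μ₀ = (2 * π * n.centralBinom) ^ 2 := by
  have h1 : ∫ θ in Ioc 0 (2 * π), chordSq θ ^ n = 2 * π * n.centralBinom := by
    rw [← intervalIntegral.integral_of_le (by positivity), integral_chordSq_pow]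
  simp_rw [mul_pow]
  exact (integral_prod_mul (fun θ ↦ chordSq θ ^ n) fun θ ↦ chordSq θ ^ n).trans (by rw [h1]; ring)

theorem integrable_and_hasSum_integral_neg_log_one_sub_mul_chordSq {t : ℝ} (ht0 : 0 ≤ t)
    (ht : t ≤ 1 / 16) :
    Integrable (fun p : ℝ × ℝ ↦ -log (1 - t * (chordSq p.1 * chordSq p.2))) μ₀ ∧
      HasSum (fun m : ℕ ↦ (2 * π) ^ 2 * (((m + 1).centralBinom : ℝ) ^ 2 * t ^ (m + 1) / (m + 1)))
        (∫ p, -log (1 - t * (chordSq p.1 * chordSq p.2)) ∂μ₀) := by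
  have hcont : Continuous fun p : ℝ × ℝ ↦ t * (chordSq p.1 * chordSq p.2) := by fun_prop
  have hterm (m : ℕ) : ∫ p, (t * (chordSq p.1 * chordSq p.2)) ^ (m + 1) / (m + 1) ∂μ₀ =
      (2 * π) ^ 2 * (((m + 1).centralBinom : ℝ) ^ 2 * t ^ (m + 1) / (m + 1)) := by
    simp_rw [integral_div, mul_pow t, integral_const_mul, integral_chordSq_mul_chordSq_pow]
    ring
  have hu0 (p : ℝ × ℝ) : 0 ≤ t * (chordSq p.1 * chordSq p.2) :=
    mul_nonneg ht0 (mul_nonneg (chordSq_nonneg _) (chordSq_nonneg _))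
  have hu1 (p : ℝ × ℝ) : t * (chordSq p.1 * chordSq p.2) ≤ 1 := by
    have h16 : chordSq p.1 * chordSq p.2 ≤ 4 * 4 :=
      mul_le_mul (chordSq_le_four _) (chordSq_le_four _) (chordSq_nonneg _) zero_le_four
    nlinarith
  simp_rw [← hterm]
  refine integrable_neg_log_one_sub_and_hasSum_integral hcont.aemeasurable (ae_of_all _ hu0) ?_
    (fun n ↦ .of_bound (hcont.pow _).aestronglyMeasurable 1 (ae_of_all _ fun p ↦ ?_)) ?_
  · exact ae_mul_chordSq_mul_chordSq_lt_one ht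
  · rw [Real.norm_of_nonneg (pow_nonneg (hu0 p) _)]
    exact pow_le_one₀ (hu0 p) (hu1 p)
  · simp_rw [hterm]
    exact (summable_centralBinom_sq_mul_pow_div ht0 ht).mul_left _

theorem log_norm_inv_sub_phiE_exp_mul_I {t : ℝ} (ht : t ≠ 0) {θ η : ℝ}
    (h : t * (chordSq θ * chordSq η) ≠ 1) :
    Real.log ‖((t⁻¹ : ℝ) : ℂ) - phiE (Complex.exp (θ * Complex.I)) (Complex.exp (η * Complex.I))‖ =
      -log t - -log (1 - t * (chordSq θ * chordSq η)) := by
  rw [phiE_exp_mul_I, ← Complex.ofReal_mul, ← Complex.ofReal_sub, Complex.norm_real,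
    Real.norm_eq_abs, Real.log_abs,
    show t⁻¹ - chordSq θ * chordSq η = t⁻¹ * (1 - t * (chordSq θ * chordSq η)) by field_simp,
    Real.log_mul (inv_ne_zero ht) (sub_ne_zero.mpr h.symm), Real.log_inv]
  ring

theorem stmt11 (t : ℝ) (ht : t ∈ Set.Ioc (0 : ℝ) (1 / 16)) :
    (Summable fun m : ℕ =>
      (Nat.choose (2 * (m + 1)) (m + 1) : ℝ) ^ 2 * t ^ (m + 1) / (m + 1)) ∧
    IntegrableOn
      (fun p : ℝ × ℝ => Real.log ‖((t⁻¹ : ℝ) : ℂ) -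
        phiE (Complex.exp (p.1 * Complex.I)) (Complex.exp (p.2 * Complex.I))‖)
      (Set.Icc 0 (2 * Real.pi) ×ˢ Set.Icc 0 (2 * Real.pi)) volume ∧
    (1 / (2 * Real.pi) ^ 2) *
        ∫ θ in (0 : ℝ)..(2 * Real.pi), ∫ η in (0 : ℝ)..(2 * Real.pi),
          Real.log ‖((t⁻¹ : ℝ) : ℂ) -
            phiE (Complex.exp (θ * Complex.I)) (Complex.exp (η * Complex.I))‖ =
      -Real.log t -
        ∑' m : ℕ, (Nat.choose (2 * (m + 1)) (m + 1) : ℝ) ^ 2 * t ^ (m + 1) / (m + 1) := by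
  obtain ⟨ht0, ht16⟩ := ht
  obtain ⟨hint, hsum⟩ := integrable_and_hasSum_integral_neg_log_one_sub_mul_chordSq ht0.le ht16
  have hF : (fun p : ℝ × ℝ ↦ Real.log ‖((t⁻¹ : ℝ) : ℂ) -
      phiE (Complex.exp (p.1 * Complex.I)) (Complex.exp (p.2 * Complex.I))‖) =ᵐ[μ₀]
      fun p ↦ -log t - -log (1 - t * (chordSq p.1 * chordSq p.2)) := by
    filter_upwards [ae_mul_chordSq_mul_chordSq_lt_one ht16] with p hp
    exact log_norm_inv_sub_phiE_exp_mul_I ht0.ne' hp.ne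
  have hFint := ((integrable_const _).sub hint).congr hF.symm
  simp_rw [← Nat.centralBinom_eq_two_mul_choose]
  refine ⟨summable_centralBinom_sq_mul_pow_div ht0.le ht16, ?_, ?_⟩
  · rwa [IntegrableOn, volume_restrict_Icc_prod_Icc]
  · simp only [intervalIntegral.integral_of_le two_pi_pos.le]
    rw [integral_integral hFint, integral_congr_ae hF, integral_sub (integrable_const _) hint,
      integral_const, smul_eq_mul, measureReal_univ_eq_two_pi_sq, ← hsum.tsum_eq, tsum_mul_left]
    field_simp
end

section
/- Define φ̂(x₁,x₂,x₃,x₄) := ∏_{i=1}^{4}(x_i − x_i⁻¹) and, for x₁,x₂,x₃,x₄ ∈ ℂ \ {0, 1, −1}, define I(x₁,x₂,x₃,x₄) := ((1+x₂)/(1−x₂), (x₁−1)/(x₁+1), (1+x₄)/(1−x₄), (x₃−1)/(x₃+1)). Then: (i) each coordinate of I(x₁,x₂,x₃,x₄) again lies in ℂ \ {0, 1, −1}; (ii) I(I(x₁,x₂,x₃,x₄)) = (x₁,x₂,x₃,x₄); and (iii) φ̂(I(x₁,x₂,x₃,x₄)) · φ̂(x₁,x₂,x₃,x₄) = 256. In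 particular, if 1 = t̂·φ̂(x₁,x₂,x₃,x₄) for some t̂ ∈ ℂ×, then 1 = (256·t̂)⁻¹·φ̂(I(x₁,x₂,x₃,x₄)). -/
/-- `φ̂(x₁,x₂,x₃,x₄) = ∏ᵢ (xᵢ − xᵢ⁻¹)`. -/
noncomputable def phiHat (x : Fin 4 → ℂ) : ℂ := ∏ i, (x i - (x i)⁻¹)

/-- The involution `I(x₁,x₂,x₃,x₄) = ((1+x₂)/(1−x₂), (x₁−1)/(x₁+1), (1+x₄)/(1−x₄), (x₃−1)/(x₃+1))`. -/
noncomputable def invI (x : Fin 4 → ℂ) : Fin 4 → ℂ :=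
  ![(1 + x 1) / (1 - x 1), (x 0 - 1) / (x 0 + 1),
    (1 + x 3) / (1 - x 3), (x 2 - 1) / (x 2 + 1)]

lemma auxA (a : ℂ) (h0 : a ≠ 0) (hm : 1 - a ≠ 0) (hq : 1 + a ≠ 0) :
    (1 + a) / (1 - a) ≠ 0 ∧ (1 + a) / (1 - a) ≠ 1 ∧ (1 + a) / (1 - a) ≠ -1 := by
  refine ⟨div_ne_zero hq hm, fun h => ?_, fun h => ?_⟩
  · rw [div_eq_iff hm] at h; exact h0 (by linear_combination h / 2)
  · rw [div_eq_iff hm] at h; exact one_ne_zero (α := ℂ) (by linear_combination h / 2)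

lemma auxB (a : ℂ) (h0 : a ≠ 0) (hs : a - 1 ≠ 0) (hp : a + 1 ≠ 0) :
    (a - 1) / (a + 1) ≠ 0 ∧ (a - 1) / (a + 1) ≠ 1 ∧ (a - 1) / (a + 1) ≠ -1 := by
  refine ⟨div_ne_zero hs hp, fun h => ?_, fun h => ?_⟩
  · rw [div_eq_iff hp] at h; exact one_ne_zero (α := ℂ) (by linear_combination -h / 2)
  · rw [div_eq_iff hp] at h; exact h0 (by linear_combination h / 2)

lemma invol1 (a : ℂ) (hp : a + 1 ≠ 0) :
    (1 + (a - 1) / (a + 1)) / (1 - (a - 1) / (a + 1)) = a := by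
  have h2 : 1 - (a - 1) / (a + 1) = 2 / (a + 1) := by field_simp; ring
  have hne : 1 - (a - 1) / (a + 1) ≠ 0 := by
    rw [h2]; exact div_ne_zero two_ne_zero hp
  rw [div_eq_iff hne]; field_simp; ring

lemma invol2 (a : ℂ) (hm : 1 - a ≠ 0) :
    ((1 + a) / (1 - a) - 1) / ((1 + a) / (1 - a) + 1) = a := by
  have h2 : (1 + a) / (1 - a) + 1 = 2 / (1 - a) := by field_simp; ring
  have hne : (1 + a) / (1 - a) + 1 ≠ 0 := by
    rw [h2]; exact div_ne_zero two_ne_zero hm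
  rw [div_eq_iff hne]; field_simp; ring

lemma pairA (a : ℂ) (h0 : a ≠ 0) (hm : 1 - a ≠ 0) (hq : 1 + a ≠ 0) :
    ((1 + a) / (1 - a) - ((1 + a) / (1 - a))⁻¹) * (a - a⁻¹) = -4 := by
  rw [inv_div]
  field_simp
  ring

lemma pairB (a : ℂ) (h0 : a ≠ 0) (hs : a - 1 ≠ 0) (hp : a + 1 ≠ 0) :
    ((a - 1) / (a + 1) - ((a - 1) / (a + 1))⁻¹) * (a - a⁻¹) = -4 := by
  rw [inv_div]
  field_simp
  ring

theorem stmt13 (x : Fin 4 → ℂ) (hx : ∀ i, x i ≠ 0 ∧ x i ≠ 1 ∧ x i ≠ -1) :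
    (∀ i, invI x i ≠ 0 ∧ invI x i ≠ 1 ∧ invI x i ≠ -1) ∧
    invI (invI x) = x ∧
    phiHat (invI x) * phiHat x = 256 ∧
    ∀ t : ℂ, t ≠ 0 → 1 = t * phiHat x → 1 = (256 * t)⁻¹ * phiHat (invI x) := by
  have h0 : ∀ i, x i ≠ 0 := fun i => (hx i).1
  have hm : ∀ i, (1:ℂ) - x i ≠ 0 := fun i => sub_ne_zero.mpr (Ne.symm (hx i).2.1)
  have hs : ∀ i, x i - 1 ≠ 0 := fun i => sub_ne_zero.mpr (hx i).2.1
  have hp : ∀ i, x i + 1 ≠ 0 := fun i h => (hx i).2.2 (eq_neg_of_add_eq_zero_left h)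
  have hq : ∀ i, (1:ℂ) + x i ≠ 0 := fun i h => hp i (by linear_combination h)
  have e0 : invI x 0 = (1 + x 1) / (1 - x 1) := rfl
  have e1 : invI x 1 = (x 0 - 1) / (x 0 + 1) := rfl
  have e2 : invI x 2 = (1 + x 3) / (1 - x 3) := rfl
  have e3 : invI x 3 = (x 2 - 1) / (x 2 + 1) := rfl
  have key : ∀ i, invI x i ≠ 0 ∧ invI x i ≠ 1 ∧ invI x i ≠ -1 := by
    intro i
    fin_cases i
    · exact auxA (x 1) (h0 1) (hm 1) (hq 1)
    · exact auxB (x 0) (h0 0) (hs 0) (hp 0)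
    · exact auxA (x 3) (h0 3) (hm 3) (hq 3)
    · exact auxB (x 2) (h0 2) (hs 2) (hp 2)
  have hprod : phiHat (invI x) * phiHat x = 256 := by
    rw [phiHat, phiHat, Fin.prod_univ_four, Fin.prod_univ_four, e0, e1, e2, e3]
    have p1 := pairA (x 1) (h0 1) (hm 1) (hq 1)
    have p2 := pairB (x 0) (h0 0) (hs 0) (hp 0)
    have p3 := pairA (x 3) (h0 3) (hm 3) (hq 3)
    have p4 := pairB (x 2) (h0 2) (hs 2) (hp 2)
    calc ((1 + x 1) / (1 - x 1) - ((1 + x 1) / (1 - x 1))⁻¹) *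
          ((x 0 - 1) / (x 0 + 1) - ((x 0 - 1) / (x 0 + 1))⁻¹) *
          ((1 + x 3) / (1 - x 3) - ((1 + x 3) / (1 - x 3))⁻¹) *
          ((x 2 - 1) / (x 2 + 1) - ((x 2 - 1) / (x 2 + 1))⁻¹) *
          ((x 0 - (x 0)⁻¹) * (x 1 - (x 1)⁻¹) * (x 2 - (x 2)⁻¹) * (x 3 - (x 3)⁻¹))
        = (((1 + x 1) / (1 - x 1) - ((1 + x 1) / (1 - x 1))⁻¹) * (x 1 - (x 1)⁻¹)) *
          (((x 0 - 1) / (x 0 + 1) - ((x 0 - 1) / (x 0 + 1))⁻¹) * (x 0 - (x 0)⁻¹)) *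
          ((((1 + x 3) / (1 - x 3) - ((1 + x 3) / (1 - x 3))⁻¹) * (x 3 - (x 3)⁻¹)) *
           (((x 2 - 1) / (x 2 + 1) - ((x 2 - 1) / (x 2 + 1))⁻¹) * (x 2 - (x 2)⁻¹))) := by ring
      _ = 256 := by rw [p1, p2, p3, p4]; norm_num
  refine ⟨key, ?_, hprod, ?_⟩
  · funext i
    fin_cases i
    · show (1 + invI x 1) / (1 - invI x 1) = x 0
      rw [e1]; exact invol1 (x 0) (hp 0)
    · show (invI x 0 - 1) / (invI x 0 + 1) = x 1
      rw [e0]; exact invol2 (x 1) (hm 1)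
    · show (1 + invI x 3) / (1 - invI x 3) = x 2
      rw [e3]; exact invol1 (x 2) (hp 2)
    · show (invI x 2 - 1) / (invI x 2 + 1) = x 3
      rw [e2]; exact invol2 (x 3) (hm 3)
  · intro t ht h
    have h256t : (256:ℂ) * t ≠ 0 := mul_ne_zero (by norm_num) ht
    rw [eq_comm, inv_mul_eq_one₀ h256t]
    linear_combination -t * hprod - phiHat (invI x) * h
end
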